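/- arXiv:cs/0612069 — 4 statements merged into one kernel-verified Lean document; each statement's English description precedes it below -/
import Mathlib

section
/- If Γ is an ω-categorical relational structure, then there exists an endomorphism c of Γ such that for every endomorphism g of Γ, every finite substructure of c(Γ) embeds into g(Γ); i.e., there is an endomorphic image of Γ of smallest age. -/
open FirstOrder Language Structure

universe u v w

/-- The structure induced on a subset of a relational structure. -/
def Set.inducedStructure (L : Language) [L.IsRelational] {M : Type u} [L.Structure M]
    (s : Set M) : L.Structure s where
  funMap := fun f _ => isEmptyElim f
  RelMap := fun r x => RelMap r fun i => (x i : M)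

attribute [instance] Set.inducedStructure

/-- ω-categoricity via Ryll-Nardzewski: the automorphism group is oligomorphic, i.e.
has finitely many orbits of `n`-tuples for every `n`. -/
def Oligomorphic (L : Language) (M : Type u) [L.Structure M] : Prop :=
  ∀ n : ℕ, ∃ F : Set (Fin n → M), F.Finite ∧
    ∀ t : Fin n → M, ∃ s ∈ F, ∃ α : M ≃[L] M, ∀ i, α (s i) = t i

/-- The age of `M` is contained in the age of `N`: every finite induced substructure of `M`
embeds into `N`. -/
def AgeLE (L : Language) (M : Type u) (N : Type v) [L.Structure M] [L.Structure N] : Prop :=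
  ∀ s : Set M, s.Finite → ∃ f : M → N, Set.InjOn f s ∧
    ∀ (n : ℕ) (r : L.Relations n) (x : Fin n → M), (∀ i, x i ∈ s) →
      (RelMap r x ↔ RelMap r (f ∘ x))

/-- A structure is a core if every endomorphism is an embedding (injective and reflecting
all relations). -/
def IsCore (L : Language) (N : Type u) [L.Structure N] : Prop :=
  ∀ e : N →[L] N, Function.Injective e ∧
    ∀ (n : ℕ) (r : L.Relations n) (x : Fin n → N), RelMap r (⇑e ∘ x) ↔ RelMap r x

/-- A structure is homogeneous if every isomorphism between finite induced substructures
extends to an automorphism. -/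
def IsHomogeneous (L : Language) (N : Type u) [L.Structure N] : Prop :=
  ∀ s : Set N, s.Finite → ∀ f : N → N, Set.InjOn f s →
    (∀ (n : ℕ) (r : L.Relations n) (x : Fin n → N), (∀ i, x i ∈ s) →
      (RelMap r x ↔ RelMap r (f ∘ x))) →
    ∃ α : N ≃[L] N, ∀ a ∈ s, α a = f a

/-- Homomorphic equivalence: homomorphisms exist in both directions. -/
def HomEquiv (L : Language) (M : Type u) (N : Type v) [L.Structure M] [L.Structure N] : Prop :=
  Nonempty (M →[L] N) ∧ Nonempty (N →[L] M)

/-- Existential positive formulas: built from atomic formulas by `∧`, `∨` and `∃`. -/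
inductive IsEP {L : Language} {α : Type w} : ∀ {n : ℕ}, L.BoundedFormula α n → Prop
  | equal {n : ℕ} (t₁ t₂ : L.Term (α ⊕ Fin n)) : IsEP (t₁.bdEqual t₂)
  | rel {n l : ℕ} (R : L.Relations l) (ts : Fin l → L.Term (α ⊕ Fin n)) :
      IsEP (R.boundedFormula ts)
  | inf {n : ℕ} {φ ψ : L.BoundedFormula α n} : IsEP φ → IsEP ψ → IsEP (φ ⊓ ψ)
  | sup {n : ℕ} {φ ψ : L.BoundedFormula α n} : IsEP φ → IsEP ψ → IsEP (φ ⊔ ψ)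
  | ex {n : ℕ} {φ : L.BoundedFormula α (n + 1)} : IsEP φ → IsEP φ.ex

/-- Primitive positive formulas: existentially quantified conjunctions of atomic formulas. -/
inductive IsPP {L : Language} {α : Type w} : ∀ {n : ℕ}, L.BoundedFormula α n → Prop
  | equal {n : ℕ} (t₁ t₂ : L.Term (α ⊕ Fin n)) : IsPP (t₁.bdEqual t₂)
  | rel {n l : ℕ} (R : L.Relations l) (ts : Fin l → L.Term (α ⊕ Fin n)) :
      IsPP (R.boundedFormula ts)
  | inf {n : ℕ} {φ ψ : L.BoundedFormula α n} : IsPP φ → IsPP ψ → IsPP (φ ⊓ ψ)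
  | ex {n : ℕ} {φ : L.BoundedFormula α (n + 1)} : IsPP φ → IsPP φ.ex

/-- Universal formulas. -/
inductive IsUniv {L : Language} {α : Type w} : ∀ {n : ℕ}, L.BoundedFormula α n → Prop
  | of_isQF {n : ℕ} {φ : L.BoundedFormula α n} : φ.IsQF → IsUniv φ
  | all {n : ℕ} {φ : L.BoundedFormula α (n + 1)} : IsUniv φ → IsUniv φ.all

/-- Existential formulas. -/
inductive IsExi {L : Language} {α : Type w} : ∀ {n : ℕ}, L.BoundedFormula α n → Prop
  | of_isQF {n : ℕ} {φ : L.BoundedFormula α n} : φ.IsQF → IsExi φ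
  | ex {n : ℕ} {φ : L.BoundedFormula α (n + 1)} : IsExi φ → IsExi φ.ex

/-- `Γ` contains, among its relations, every relation definable by an existential positive
formula. -/
def ContainsEP (L : Language) (M : Type u) [L.Structure M] : Prop :=
  ∀ (n : ℕ) (φ : L.Formula (Fin n)), IsEP φ →
    ∃ r : L.Relations n, ∀ x : Fin n → M, RelMap r x ↔ φ.Realize x

/-- `Γ` contains, among its relations, every relation definable by a primitive positive
formula. -/
def ContainsPP (L : Language) (M : Type u) [L.Structure M] : Prop :=
  ∀ (n : ℕ) (φ : L.Formula (Fin n)), IsPP φ →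
    ∃ r : L.Relations n, ∀ x : Fin n → M, RelMap r x ↔ φ.Realize x

/-- A structure is model-complete if every self-embedding is elementary. -/
def IsModelComplete (L : Language) (M : Type u) [L.Structure M] : Prop :=
  ∀ e : M ↪[L] M, ∀ (n : ℕ) (φ : L.Formula (Fin n)) (x : Fin n → M),
    φ.Realize x ↔ φ.Realize (⇑e ∘ x)

/-- The universal first-order theory of a structure. -/
def UnivTheory (L : Language) (M : Type u) [L.Structure M] : L.Theory :=
  {σ : L.Sentence | IsUniv σ ∧ M ⊨ σ}
section SmallestAgeAux

variable (L : Language) [L.IsRelational] {M : Type u} [L.Structure M]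

/-- Atomic facts about an `n`-tuple: relation facts and equality facts. -/
def QFact (n : ℕ) : Type _ :=
  (Σ l : ℕ, L.Relations l × (Fin l → Fin n)) ⊕ (Fin n × Fin n)

/-- The quantifier-free type of a tuple. -/
def Tqf {n : ℕ} (t : Fin n → M) : Set (QFact L n) :=
  {f | Sum.rec (fun a => RelMap a.2.1 (t ∘ a.2.2)) (fun p => t p.1 = t p.2) f}

lemma Tset_comp {a b : ℕ} (σ : Fin a → Fin b) (t t' : Fin b → M)
    (h : Tqf L t = Tqf L t') : Tqf L (t ∘ σ) = Tqf L (t' ∘ σ) := by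
  ext f
  rcases f with ⟨l, r, τ⟩ | ⟨i, j⟩
  · show RelMap r (t ∘ (σ ∘ τ)) ↔ RelMap r (t' ∘ (σ ∘ τ))
    exact Set.ext_iff.mp h (Sum.inl ⟨l, r, σ ∘ τ⟩)
  · show t (σ i) = t (σ j) ↔ t' (σ i) = t' (σ j)
    exact Set.ext_iff.mp h (Sum.inr (σ i, σ j))

lemma Tset_aut {n : ℕ} (α : M ≃[L] M) (t : Fin n → M) : Tqf L (⇑α ∘ t) = Tqf L t := by
  ext f
  rcases f with ⟨l, r, τ⟩ | ⟨i, j⟩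
  · show RelMap r (⇑α ∘ (t ∘ τ)) ↔ RelMap r (t ∘ τ)
    exact α.map_rel r (t ∘ τ)
  · show α (t i) = α (t j) ↔ t i = t j
    constructor
    · intro h
      have h2 := congrArg α.symm h
      simpa using h2
    · exact congrArg α

lemma Tset_hom_mono {n : ℕ} (e : M →[L] M) (t : Fin n → M) :
    Tqf L t ⊆ Tqf L (⇑e ∘ t) := by
  intro f hf
  rcases f with ⟨l, r, τ⟩ | ⟨i, j⟩
  · show RelMap r (⇑e ∘ (t ∘ τ))
    exact e.map_rel r (t ∘ τ) hf
  · show e (t i) = e (t j)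
    exact congrArg e hf

/-- Tuple equivalence via an automorphism. -/
def EquivTup {n : ℕ} (t u : Fin n → M) : Prop :=
  ∃ α : M ≃[L] M, ∀ i, α (t i) = u i

lemma Tset_of_equivTup {n : ℕ} {t u : Fin n → M} (h : EquivTup L t u) :
    Tqf L u = Tqf L t := by
  obtain ⟨α, hα⟩ := h
  rw [show u = ⇑α ∘ t from funext fun i => (hα i).symm, Tset_aut]

lemma Tset_range_finite (hM : Oligomorphic L M) (n : ℕ) :
    (Set.range fun t : Fin n → M => Tqf L t).Finite := by
  obtain ⟨F, hF, hcov⟩ := hM n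
  refine (hF.image (fun t => Tqf L t)).subset ?_
  rintro _ ⟨t, rfl⟩
  obtain ⟨s, hs, α, hα⟩ := hcov t
  exact ⟨s, hs, (Tset_of_equivTup L ⟨α, hα⟩).symm⟩

variable {L}
variable (hM : Oligomorphic L M) (m : ℕ → M)

/-- The first `N` elements of the enumeration as a tuple. -/
def mb (N : ℕ) : Fin N → M := fun i => m i

/-- The set of qf-types of images of the initial tuple under a set of endomorphisms. -/
def TT (n : ℕ) (S : Set (M →[L] M)) : Set (Set (QFact L n)) :=
  (fun e : M →[L] M => Tqf L (⇑e ∘ mb m n)) '' S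

include hM in
lemma exists_maxT (n : ℕ) {S : Set (M →[L] M)} (hS : S.Nonempty) :
    ∃ T ∈ TT m n S, ∀ T' ∈ TT m n S, T ⊆ T' → T' = T := by
  have hfin : (TT m n S).Finite := by
    refine (Tset_range_finite L hM n).subset ?_
    rintro _ ⟨e, -, rfl⟩
    exact ⟨_, rfl⟩
  obtain ⟨T, hT, hmax⟩ := Set.Finite.exists_maximalFor id _ hfin (hS.image _)
  exact ⟨T, hT, fun T' h' hsub => le_antisymm (hmax h' hsub) hsub⟩

open Classical in
/-- Choice of a maximal qf-type among the images. -/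
noncomputable def choiceT (n : ℕ) (S : Set (M →[L] M)) : Set (QFact L n) :=
  if h : S.Nonempty then (exists_maxT hM m n h).choose else ∅

open Classical in
lemma choiceT_spec (n : ℕ) {S : Set (M →[L] M)} (hS : S.Nonempty) :
    choiceT hM m n S ∈ TT m n S ∧
      ∀ T' ∈ TT m n S, choiceT hM m n S ⊆ T' → T' = choiceT hM m n S := by
  rw [choiceT, dif_pos hS]
  exact (exists_maxT hM m n hS).choose_spec

/-- The decreasing sequence of sets of endomorphisms with successively maximal types. -/
noncomputable def EE : ℕ → Set (M →[L] M)
  | 0 => Set.univ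
  | n + 1 =>
    {e | e ∈ EE n ∧ Tqf L (⇑e ∘ mb m (n + 1)) = choiceT hM m (n + 1) (EE n)}

lemma EE_nonempty : ∀ n, (EE hM m n).Nonempty
  | 0 => ⟨Hom.id L M, Set.mem_univ _⟩
  | n + 1 => by
    obtain ⟨⟨e, he, hTe⟩, -⟩ := choiceT_spec hM m (n + 1) (EE_nonempty n)
    exact ⟨e, he, hTe⟩

lemma EE_comp : ∀ n, ∀ e ∈ EE hM m n, ∀ g : M →[L] M, g.comp e ∈ EE hM m n
  | 0 => fun _ _ _ => Set.mem_univ _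
  | n + 1 => by
    rintro e ⟨he, hT⟩ g
    refine ⟨EE_comp n e he g, ?_⟩
    have hco : ⇑(g.comp e) ∘ mb m (n + 1) = ⇑g ∘ (⇑e ∘ mb m (n + 1)) := by
      funext i; simp [Hom.comp_apply]
    have h1 : Tqf L (⇑e ∘ mb m (n + 1)) ⊆ Tqf L (⇑(g.comp e) ∘ mb m (n + 1)) := by
      rw [hco]; exact Tset_hom_mono L g _
    have hmem : Tqf L (⇑(g.comp e) ∘ mb m (n + 1)) ∈ TT m (n + 1) (EE hM m n) :=
      ⟨g.comp e, EE_comp n e he g, rfl⟩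
    exact (choiceT_spec hM m (n + 1) (EE_nonempty hM m n)).2 _ hmem (hT ▸ h1)

lemma EE_mono {a b : ℕ} (h : a ≤ b) : EE hM m b ⊆ EE hM m a := by
  induction b, h using Nat.le_induction with
  | base => exact fun e he => he
  | succ n hn ih => exact fun e he => ih he.1

/-- A selected endomorphism in `EE n`. -/
noncomputable def esel (n : ℕ) : M →[L] M := (EE_nonempty hM m n).choose

lemma esel_mem (n : ℕ) : esel hM m n ∈ EE hM m n := (EE_nonempty hM m n).choose_spec

/-- The canonical maximal type at level `n`. -/
noncomputable def PT (n : ℕ) : Set (QFact L n) := Tqf L (⇑(esel hM m n) ∘ mb m n)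

lemma Tset_EE {n : ℕ} {e : M →[L] M} (he : e ∈ EE hM m n) :
    Tqf L (⇑e ∘ mb m n) = PT hM m n := by
  cases n with
  | zero =>
    rw [PT, show ⇑e ∘ mb m 0 = ⇑(esel hM m 0) ∘ mb m 0 from funext fun i => i.elim0]
  | succ n =>
    have h2 := (esel_mem hM m (n + 1)).2
    rw [PT]
    exact he.2.trans h2.symm

lemma PT_restrict {n N : ℕ} (h : n ≤ N) {t : Fin N → M} (ht : Tqf L t = PT hM m N) :
    Tqf L (t ∘ Fin.castLE h) = PT hM m n := by
  have he : esel hM m N ∈ EE hM m n := EE_mono hM m h (esel_mem hM m N)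
  have h1 : Tqf L t = Tqf L (⇑(esel hM m N) ∘ mb m N) := ht
  have h2 := Tset_comp L (Fin.castLE h) _ _ h1
  rw [h2, show (⇑(esel hM m N) ∘ mb m N) ∘ Fin.castLE h = ⇑(esel hM m N) ∘ mb m n from
    funext fun i => rfl]
  exact Tset_EE hM m he

lemma PT_realized (n : ℕ) (g : M →[L] M) :
    ∃ w : Fin n → M, (∀ i, w i ∈ Set.range ⇑g) ∧ Tqf L w = PT hM m n := by
  refine ⟨⇑(g.comp (esel hM m n)) ∘ mb m n, fun i => ?_, ?_⟩
  · exact ⟨esel hM m n (mb m n i), (Hom.comp_apply g (esel hM m n) _).symm⟩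
  · exact Tset_EE hM m (EE_comp hM m n _ (esel_mem hM m n) g)

/-- `t` is a coherent realization of the canonical type at level `n`. -/
def Good (n : ℕ) (t : Fin n → M) : Prop :=
  Tqf L t = PT hM m n ∧
    ∀ N (h : n ≤ N), ∃ u : Fin N → M, Tqf L u = PT hM m N ∧
      EquivTup L (u ∘ Fin.castLE h) t

lemma good_zero : Good hM m 0 (fun i => i.elim0) := by
  constructor
  · rw [PT, show (fun i : Fin 0 => i.elim0) = ⇑(esel hM m 0) ∘ mb m 0 from
      funext fun i => i.elim0]
  · intro N h
    refine ⟨⇑(esel hM m N) ∘ mb m N, Tset_EE hM m (esel_mem hM m N), FirstOrder.Language.Equiv.refl L M, ?_⟩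
    exact fun i => i.elim0

lemma good_step {n : ℕ} {t : Fin n → M} (hg : Good hM m n t) :
    ∃ t' : Fin (n + 1) → M, Good hM m (n + 1) t' ∧
      ∀ i : Fin n, t' (Fin.castLE (Nat.le_succ n) i) = t i := by
  classical
  have hw : ∀ k : ℕ, ∃ u : Fin (n + 1 + k) → M, Tqf L u = PT hM m (n + 1 + k) ∧
      EquivTup L (u ∘ Fin.castLE (by omega : n ≤ n + 1 + k)) t := fun k =>
    hg.2 (n + 1 + k) (by omega)
  choose u hu1 hu2 using hw
  set v : ∀ k : ℕ, Fin (n + 1) → M :=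
    fun k => u k ∘ Fin.castLE (by omega : n + 1 ≤ n + 1 + k) with hvdef
  have hvT : ∀ k, Tqf L (v k) = PT hM m (n + 1) := fun k =>
    PT_restrict hM m _ (hu1 k)
  obtain ⟨F, hF, hcov⟩ := hM (n + 1)
  haveI : Finite ↥F := hF.to_subtype
  have hrep : ∀ k, ∃ s : ↥F, EquivTup L (s : Fin (n + 1) → M) (v k) := by
    intro k
    obtain ⟨s, hsF, α, hα⟩ := hcov (v k)
    exact ⟨⟨s, hsF⟩, α, hα⟩
  choose φ hφ using hrep
  obtain ⟨s0, hs0⟩ := Finite.exists_infinite_fiber φ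
  have hI : (φ ⁻¹' {s0}).Infinite := Set.infinite_coe_iff.mp hs0
  obtain ⟨k0, hk0⟩ := hI.nonempty
  obtain ⟨α₀, hα₀⟩ := hu2 k0
  refine ⟨⇑α₀ ∘ v k0, ⟨?_, ?_⟩, ?_⟩
  · rw [Tset_aut]; exact hvT k0
  · intro N hN
    obtain ⟨k, hkI, hkN⟩ := hI.exists_gt N
    have hNk : N ≤ n + 1 + k := by omega
    refine ⟨u k ∘ Fin.castLE hNk, PT_restrict hM m _ (hu1 k), ?_⟩
    have hcomp : (u k ∘ Fin.castLE hNk) ∘ Fin.castLE hN = v k := by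
      funext i
      exact congrArg (u k) (Fin.ext rfl)
    rw [hcomp]
    obtain ⟨β, hβ⟩ := hφ k
    obtain ⟨γ, hγ⟩ := hφ k0
    have hks : φ k = s0 := hkI
    have hk0s : φ k0 = s0 := hk0
    have hβ' : ∀ i, β ((s0 : Fin (n + 1) → M) i) = v k i := by rw [← hks]; exact hβ
    have hγ' : ∀ i, γ ((s0 : Fin (n + 1) → M) i) = v k0 i := by rw [← hk0s]; exact hγ
    refine ⟨(α₀.comp γ).comp β.symm, fun i => ?_⟩
    have h1 : β.symm (v k i) = (s0 : Fin (n + 1) → M) i := by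
      rw [← hβ' i, β.symm_apply_apply]
    show α₀ (γ (β.symm (v k i))) = α₀ (v k0 i)
    rw [h1, hγ' i]
  · intro i
    show α₀ (v k0 (Fin.castLE (Nat.le_succ n) i)) = t i
    have h2 : v k0 (Fin.castLE (Nat.le_succ n) i) =
        (u k0 ∘ Fin.castLE (by omega : n ≤ n + 1 + k0)) i :=
      congrArg (u k0) (Fin.ext rfl)
    rw [h2]
    exact hα₀ i

/-- The coherent sequence of realizations. -/
noncomputable def tseq : ∀ n : ℕ, {t : Fin n → M // Good hM m n t}
  | 0 => ⟨fun i => i.elim0, good_zero hM m⟩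
  | n + 1 =>
    ⟨(good_step hM m (tseq n).2).choose, (good_step hM m (tseq n).2).choose_spec.1⟩

lemma tseq_step (n : ℕ) (i : Fin n) :
    (tseq hM m (n + 1)).1 (Fin.castLE (Nat.le_succ n) i) = (tseq hM m n).1 i := by
  have h := (good_step hM m (tseq hM m n).2).choose_spec.2 i
  exact h

lemma tseq_coh {n N : ℕ} (h : n ≤ N) (i : Fin n) :
    (tseq hM m N).1 (Fin.castLE h i) = (tseq hM m n).1 i := by
  induction N, h using Nat.le_induction with
  | base => exact congrArg _ (Fin.ext rfl)
  | succ N hle ih =>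
    have hcast : Fin.castLE (by omega : n ≤ N + 1) i =
        Fin.castLE (Nat.le_succ N) (Fin.castLE hle i) := Fin.ext rfl
    rw [hcast, tseq_step hM m N, ih]

end SmallestAgeAux
theorem stmt_0 {L : Language} [L.IsRelational] {M : Type u} [L.Structure M] [Countable M]
    (hM : Oligomorphic L M) :
    ∃ c : M →[L] M, ∀ g : M →[L] M, AgeLE L ↥(Set.range c) ↥(Set.range g) := by
  rcases isEmpty_or_nonempty M with hE | hNE
  · -- M is empty: trivial
    refine ⟨Hom.id L M, fun g => ?_⟩
    intro s hs
    let f : ↥(Set.range ⇑(Hom.id L M)) → ↥(Set.range ⇑g) := fun a => (hE.false a.1).elim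
    refine ⟨f, fun a ha => (hE.false a.1).elim, ?_⟩
    intro n r x hx
    cases n with
    | zero =>
      show RelMap r (fun i => ((x i : M))) ↔ RelMap r (fun i => (((f ∘ x) i : M)))
      rw [show (fun i : Fin 0 => ((x i : M))) = (fun i => (((f ∘ x) i : M))) from
        funext fun i => i.elim0]
    | succ n => exact (hE.false (x 0).1).elim
  · obtain ⟨m, hm⟩ := exists_surjective_nat M
    classical
    have htsT : ∀ n, Tqf L ((tseq hM m n).1) = PT hM m n := fun n => (tseq hM m n).2.1
    set ts : ∀ n : ℕ, Fin n → M := fun n => (tseq hM m n).1 with hts_def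
    have hcoh : ∀ {n N : ℕ} (h : n ≤ N) (i : Fin n), ts N (Fin.castLE h i) = ts n i :=
      fun h i => tseq_coh hM m h i
    let ℓ : M → ℕ := fun x => (hm x).choose
    have hℓ : ∀ x, m (ℓ x) = x := fun x => (hm x).choose_spec
    let c₀ : M → M := fun x => ts (ℓ x + 1) ⟨ℓ x, Nat.lt_succ_self _⟩
    have hc₀ : ∀ (x : M) (N : ℕ) (h : ℓ x < N), c₀ x = ts N ⟨ℓ x, h⟩ := by
      intro x N h
      have h2 := hcoh (show ℓ x + 1 ≤ N from h) ⟨ℓ x, Nat.lt_succ_self _⟩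
      rw [show (⟨ℓ x, h⟩ : Fin N) = Fin.castLE (show ℓ x + 1 ≤ N from h)
        ⟨ℓ x, Nat.lt_succ_self _⟩ from Fin.ext rfl]
      exact h2.symm
    have hhom : ∀ {k : ℕ} (r : L.Relations k) (x : Fin k → M),
        RelMap r x → RelMap r (c₀ ∘ x) := by
      intro k r x hx
      have hlt : ∀ i, ℓ (x i) < (Finset.univ.sup fun i : Fin k => ℓ (x i)) + 1 :=
        fun i => Nat.lt_succ_of_le (Finset.le_sup (f := fun i : Fin k => ℓ (x i)) (Finset.mem_univ i))
      set N := (Finset.univ.sup fun i : Fin k => ℓ (x i)) + 1 with hNdef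
      set σ : Fin k → Fin N := fun i => ⟨ℓ (x i), hlt i⟩ with hσdef
      have hxeq : x = mb m N ∘ σ := funext fun i => (hℓ (x i)).symm
      have hfact : (Sum.inl ⟨k, r, σ⟩ : QFact L N) ∈ Tqf L (⇑(esel hM m N) ∘ mb m N) := by
        show RelMap r ((⇑(esel hM m N) ∘ mb m N) ∘ σ)
        have heq : (⇑(esel hM m N) ∘ mb m N) ∘ σ = ⇑(esel hM m N) ∘ x := by
          rw [hxeq, Function.comp_assoc]
        rw [heq]
        exact (esel hM m N).map_rel r x hx
      rw [Tset_EE hM m (esel_mem hM m N), ← htsT N] at hfact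
      have hrel : RelMap r (ts N ∘ σ) := hfact
      have hcx : c₀ ∘ x = ts N ∘ σ := funext fun i => hc₀ (x i) N (hlt i)
      rw [hcx]
      exact hrel
    let c : M →[L] M := ⟨c₀, fun {k} F _ => isEmptyElim F, fun {k} r x h => hhom r x h⟩
    refine ⟨c, ?_⟩
    intro g s hs
    have hmemc : ∀ a : ↥(Set.range ⇑c), ∃ j : ℕ, ∀ N (h : j < N), (a : M) = ts N ⟨j, h⟩ := by
      rintro ⟨a, x, rfl⟩
      exact ⟨ℓ x, fun N h => hc₀ x N h⟩
    let ja : ↥(Set.range ⇑c) → ℕ := fun a => (hmemc a).choose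
    have hja : ∀ (a : ↥(Set.range ⇑c)) (N : ℕ) (h : ja a < N), (a : M) = ts N ⟨ja a, h⟩ :=
      fun a => (hmemc a).choose_spec
    obtain ⟨b, hb⟩ := (hs.image ja).bddAbove
    set N := b + 1 with hNdef
    have hsN : ∀ a ∈ s, ja a < N := fun a ha =>
      Nat.lt_succ_of_le (hb (Set.mem_image_of_mem ja ha))
    have hN0 : 0 < N := Nat.succ_pos b
    obtain ⟨w, hwmem, hwT⟩ := PT_realized hM m N g
    have hwts : Tqf L w = Tqf L (ts N) := by rw [hwT, htsT N]
    let jf : ↥(Set.range ⇑c) → Fin N := fun a => if h : ja a < N then ⟨ja a, h⟩ else ⟨0, hN0⟩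
    have hjf : ∀ a ∈ s, (a : M) = ts N (jf a) := by
      intro a ha
      have hd : jf a = ⟨ja a, hsN a ha⟩ := dif_pos (hsN a ha)
      rw [hd]
      exact hja a N (hsN a ha)
    refine ⟨fun a => ⟨w (jf a), hwmem (jf a)⟩, ?_, ?_⟩
    · intro a ha b' hb' hab
      have h1 : w (jf a) = w (jf b') := congrArg Subtype.val hab
      have h2 : (Sum.inr (jf a, jf b') : QFact L N) ∈ Tqf L w := h1
      rw [hwts] at h2
      have h3 : ts N (jf a) = ts N (jf b') := h2
      exact Subtype.ext ((hjf a ha).trans (h3.trans (hjf b' hb').symm))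
    · intro k r x hx
      have h1 : (fun i => ((x i : M))) = ts N ∘ (jf ∘ x) := funext fun i => hjf (x i) (hx i)
      have hiff : (Sum.inl ⟨k, r, jf ∘ x⟩ : QFact L N) ∈ Tqf L (ts N) ↔
          (Sum.inl ⟨k, r, jf ∘ x⟩ : QFact L N) ∈ Tqf L w := by rw [hwts]
      show RelMap r (fun i => ((x i : M))) ↔ RelMap r (w ∘ (jf ∘ x))
      rw [h1]
      exact hiff
end

section
/- Let Γ be an ω-categorical relational structure that contains, among its relations, every relation definable in Γ by an existential positive first-order formula. Then every homomorphism between two countable structures Γ₁ and Γ₂ having the same age as c(Γ) (the minimal-age endomorphic image of Γ) is an embedding. -/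
open FirstOrder Language Structure

universe u v w

section EPlemmas
variable {L : Language} {α : Type w} {β : Type w}

lemma IsEP.relabel {m : ℕ} {g : α → β ⊕ Fin m} :
    ∀ {k : ℕ} {φ : L.BoundedFormula α k}, IsEP φ → IsEP (φ.relabel g) := by
  intro k φ h
  induction h with
  | equal t₁ t₂ => exact IsEP.equal _ _
  | rel R ts => exact IsEP.rel R _
  | inf h₁ h₂ ih₁ ih₂ => exact IsEP.inf ih₁ ih₂
  | sup h₁ h₂ ih₁ ih₂ => exact IsEP.sup ih₁ ih₂
  | ex h ih => rw [BoundedFormula.relabel_ex]; exact IsEP.ex ih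

lemma IsEP.exs : ∀ {k : ℕ} {φ : L.BoundedFormula α k}, IsEP φ → IsEP φ.exs := by
  intro k
  induction k with
  | zero => exact fun h => h
  | succ k ih => exact fun h => ih h.ex

lemma IsEP.foldr_inf {k : ℕ} {b : L.BoundedFormula α k} (hb : IsEP b)
    (l : List (L.BoundedFormula α k)) (hl : ∀ φ ∈ l, IsEP φ) :
    IsEP (l.foldr (· ⊓ ·) b) := by
  induction l with
  | nil => exact hb
  | cons φ l ih =>
      exact IsEP.inf (hl φ (by simp)) (ih fun ψ hψ => hl ψ (by simp [hψ]))

lemma realize_foldr_inf {M : Type u} [L.Structure M] {k : ℕ}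
    (l : List (L.BoundedFormula α k)) (b : L.BoundedFormula α k)
    (v : α → M) (xs : Fin k → M) :
    (l.foldr (· ⊓ ·) b).Realize v xs ↔ (∀ φ ∈ l, φ.Realize v xs) ∧ b.Realize v xs := by
  induction l with
  | nil => simp
  | cons φ l ih => simp [BoundedFormula.realize_inf, ih]; tauto

end EPlemmas

section DomSec
variable {L : Language} {M : Type u} [L.Structure M]

/-- `v` satisfies every existential positive formula that `u` satisfies. -/
def Dom {k : ℕ} (u v : Fin k → M) : Prop :=
  ∀ φ : L.Formula (Fin k), IsEP φ → φ.Realize u → φ.Realize v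

lemma Dom.refl {k : ℕ} (u : Fin k → M) : Dom (L := L) u u := fun _ _ h => h

lemma Dom.trans {k : ℕ} {u v w : Fin k → M} (h₁ : Dom (L := L) u v) (h₂ : Dom (L := L) v w) :
    Dom (L := L) u w := fun φ hφ h => h₂ φ hφ (h₁ φ hφ h)

/-- A relation applied along a substitution, as a formula. -/
def relFormula {l k : ℕ} (ρ : L.Relations l) (τ : Fin l → Fin k) : L.Formula (Fin k) :=
  ρ.boundedFormula fun i => Term.var (Sum.inl (τ i))

lemma realize_relFormula {l k : ℕ} (ρ : L.Relations l) (τ : Fin l → Fin k) (v : Fin k → M) :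
    (relFormula ρ τ).Realize v ↔ RelMap ρ (v ∘ τ) := by
  rw [relFormula, Formula.Realize, BoundedFormula.realize_rel]
  simp [Term.realize, Function.comp_def]

lemma isEP_relFormula {l k : ℕ} (ρ : L.Relations l) (τ : Fin l → Fin k) :
    IsEP (relFormula ρ τ) := IsEP.rel _ _

/-- Equality of two coordinates as a formula. -/
def eqFormula {k : ℕ} (i j : Fin k) : L.Formula (Fin k) :=
  Term.bdEqual (Term.var (Sum.inl i)) (Term.var (Sum.inl j))

lemma realize_eqFormula {k : ℕ} (i j : Fin k) (v : Fin k → M) :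
    (eqFormula (L := L) i j).Realize v ↔ v i = v j := by
  simp [eqFormula, Formula.Realize, BoundedFormula.realize_bdEqual, Term.realize]

lemma isEP_eqFormula {k : ℕ} (i j : Fin k) : IsEP (eqFormula (L := L) i j) := IsEP.equal _ _

lemma Dom.rel {k : ℕ} {u v : Fin k → M} (h : Dom (L := L) u v) {l : ℕ} (ρ : L.Relations l)
    (τ : Fin l → Fin k) : RelMap ρ (u ∘ τ) → RelMap ρ (v ∘ τ) := by
  intro hr
  have := h (relFormula ρ τ) (isEP_relFormula ρ τ) ((realize_relFormula ρ τ u).2 hr)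
  exact (realize_relFormula ρ τ v).1 this

lemma Dom.eq {k : ℕ} {u v : Fin k → M} (h : Dom (L := L) u v) {i j : Fin k} (hij : u i = u j) :
    v i = v j := by
  have := h (eqFormula i j) (isEP_eqFormula i j) ((realize_eqFormula i j u).2 hij)
  exact (realize_eqFormula i j v).1 this

lemma realize_comp_equiv (α : M ≃[L] M) {k : ℕ} (φ : L.Formula (Fin k)) (v : Fin k → M) :
    φ.Realize (⇑α ∘ v) ↔ φ.Realize v :=
  StrongHomClass.realize_formula α φ

lemma Dom.comp_equiv_right {k : ℕ} {u v : Fin k → M} (α : M ≃[L] M) (h : Dom (L := L) u v) :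
    Dom (L := L) u (⇑α ∘ v) :=
  fun φ hφ hu => (realize_comp_equiv α φ v).2 (h φ hφ hu)

lemma Dom.of_comp_equiv {k : ℕ} {u v : Fin k → M} (α : M ≃[L] M) (h : Dom (L := L) u v) :
    Dom (L := L) u (⇑α.symm ∘ v) := by
  have : Dom (L := L) u (⇑α.symm ∘ v) := fun φ hφ hu => by
    have := h φ hφ hu
    rw [← realize_comp_equiv α φ (⇑α.symm ∘ v)]
    convert this using 2
    funext i
    simp
  exact this

lemma realize_foldr_inf_formula {α : Type w} {L : Language} {M : Type u} [L.Structure M]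
    (l : List (L.Formula α)) (b : L.Formula α) (v : α → M) :
    (l.foldr (· ⊓ ·) b).Realize v ↔ (∀ φ ∈ l, φ.Realize v) ∧ b.Realize v :=
  realize_foldr_inf l b v default

end DomSec

section MinEP
variable {L : Language} {M : Type u} [L.Structure M]

lemma realize_relabel_inr {n k : ℕ} (φ : L.Formula (Fin k)) {v : Fin n → M} {x : Fin k → M} :
    (BoundedFormula.relabel Sum.inr φ).Realize v x ↔ φ.Realize x := by
  rw [BoundedFormula.realize_relabel, Formula.Realize, Sum.elim_comp_inr, Fin.castAdd_zero,
    Fin.cast_refl, Function.comp_id,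
    Subsingleton.elim (x ∘ (Fin.natAdd k : Fin 0 → Fin k)) default]

/-- Existence of a minimal existential positive formula for a tuple. -/
lemma exists_minEP (hM : Oligomorphic L M) {k : ℕ} (hk : 0 < k) (u : Fin k → M) :
    ∃ φ : L.Formula (Fin k), IsEP φ ∧ φ.Realize u ∧ ∀ v, φ.Realize v → Dom (L := L) u v := by
  classical
  obtain ⟨F, hFfin, hcov⟩ := hM k
  have choice : ∀ t : Fin k → M, ¬ Dom (L := L) u t →
      ∃ ψ : L.Formula (Fin k), IsEP ψ ∧ ψ.Realize u ∧ ¬ ψ.Realize t := by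
    intro t ht
    simp only [Dom, not_forall] at ht
    obtain ⟨ψ, hψ, h1, h2⟩ := ht
    exact ⟨ψ, hψ, h1, h2⟩
  set i0 : Fin k := ⟨0, hk⟩ with hi0
  set base : L.Formula (Fin k) := eqFormula i0 i0 with hbase
  set g : (Fin k → M) → L.Formula (Fin k) := fun t =>
    if h : Dom (L := L) u t then base else Classical.choose (choice t h) with hg
  have hgEP : ∀ t, IsEP (g t) := by
    intro t
    by_cases h : Dom (L := L) u t
    · rw [hg]; simp only; rw [dif_pos h]; exact isEP_eqFormula i0 i0
    · rw [hg]; simp only; rw [dif_neg h]; exact (Classical.choose_spec (choice t h)).1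
  have hgu : ∀ t, (g t).Realize u := by
    intro t
    by_cases h : Dom (L := L) u t
    · rw [hg]; simp only; rw [dif_pos h, hbase]; exact (realize_eqFormula i0 i0 u).2 rfl
    · rw [hg]; simp only; rw [dif_neg h]; exact (Classical.choose_spec (choice t h)).2.1
  have hgt : ∀ t, ¬ Dom (L := L) u t → ¬ (g t).Realize t := by
    intro t h
    rw [hg]; simp only; rw [dif_neg h]; exact (Classical.choose_spec (choice t h)).2.2
  set l : List (L.Formula (Fin k)) := hFfin.toFinset.toList.map g with hl
  refine ⟨l.foldr (· ⊓ ·) base, ?_, ?_, ?_⟩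
  · refine IsEP.foldr_inf (isEP_eqFormula i0 i0) l ?_
    intro φ hφ
    rw [hl] at hφ
    obtain ⟨t, _, rfl⟩ := List.mem_map.1 hφ
    exact hgEP t
  · refine (realize_foldr_inf_formula l base u).2 ⟨?_, (realize_eqFormula i0 i0 u).2 rfl⟩
    intro φ hφ
    obtain ⟨t, _, rfl⟩ := List.mem_map.1 hφ
    exact hgu t
  · intro v hv
    obtain ⟨t, htF, α, hα⟩ := hcov v
    have hveq : ⇑α ∘ t = v := funext hα
    rw [← hveq] at hv ⊢
    have hvt : (l.foldr (· ⊓ ·) base).Realize t :=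
      (realize_comp_equiv α (l.foldr (· ⊓ ·) base) t).1 hv
    have hdomt : Dom (L := L) u t := by
      by_contra h
      have hmem : g t ∈ l := by
        rw [hl]
        exact List.mem_map.2 ⟨t, by simp [Set.Finite.mem_toFinset, htF], rfl⟩
      have := ((realize_foldr_inf_formula l base t).1 hvt).1 (g t) hmem
      exact hgt t h this
    exact hdomt.comp_equiv_right α

/-- Key extension lemma: if `v₀` dominates `u ∘ σ`, then `v₀` extends along `σ`
to a tuple dominating `u`. -/
lemma key_ext (hM : Oligomorphic L M) {n k : ℕ} (hn : 0 < n) (u : Fin k → M)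
    (σ : Fin n → Fin k) (v₀ : Fin n → M) (hd : Dom (L := L) (u ∘ σ) v₀) :
    ∃ v : Fin k → M, Dom (L := L) u v ∧ ∀ i, v (σ i) = v₀ i := by
  have hk : 0 < k := (σ ⟨0, hn⟩).pos
  obtain ⟨φ, hφEP, hφu, hφmin⟩ := exists_minEP hM hk u
  set ψ₀ : L.BoundedFormula (Fin n) k :=
    BoundedFormula.relabel (Sum.inr : Fin k → Fin n ⊕ Fin k) φ with hψ₀
  set eqs : List (L.BoundedFormula (Fin n) k) :=
    (List.finRange n).map (fun i =>
      Term.bdEqual (Term.var (Sum.inl i)) (Term.var (Sum.inr (σ i)))) with heqs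
  set matrix : L.BoundedFormula (Fin n) k := eqs.foldr (· ⊓ ·) ψ₀ with hmatrix
  set χ : L.Formula (Fin n) := matrix.exs with hχ
  have hχEP : IsEP χ := by
    refine IsEP.exs (IsEP.foldr_inf (IsEP.relabel hφEP) eqs ?_)
    intro θ hθ
    rw [heqs] at hθ
    obtain ⟨i, _, rfl⟩ := List.mem_map.1 hθ
    exact IsEP.equal _ _
  have hχuσ : χ.Realize (u ∘ σ) := by
    rw [hχ, BoundedFormula.realize_exs]
    refine ⟨u, ?_⟩
    rw [hmatrix]
    refine (realize_foldr_inf eqs ψ₀ (u ∘ σ) u).2 ⟨?_, ?_⟩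
    · intro θ hθ
      obtain ⟨i, _, rfl⟩ := List.mem_map.1 hθ
      simp [BoundedFormula.realize_bdEqual, Term.realize]
    · rw [hψ₀]
      exact (realize_relabel_inr φ).2 hφu
  have hχv₀ : χ.Realize v₀ := hd χ hχEP hχuσ
  rw [hχ, BoundedFormula.realize_exs] at hχv₀
  obtain ⟨v, hv⟩ := hχv₀
  rw [hmatrix] at hv
  obtain ⟨heqsv, hψ₀v⟩ := (realize_foldr_inf eqs ψ₀ v₀ v).1 hv
  refine ⟨v, ?_, ?_⟩
  · refine hφmin v ?_
    rw [hψ₀] at hψ₀v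
    exact (realize_relabel_inr φ).1 hψ₀v
  · intro i
    have := heqsv _ (List.mem_map.2 ⟨i, List.mem_finRange i, rfl⟩)
    simp only [BoundedFormula.realize_bdEqual, Term.realize] at this
    exact this.symm

end MinEP

section Konig
open CategoryTheory

/-- König's lemma for an inverse sequence of nonempty finite types. -/
lemma konig_sequence {X : ℕ → Type v} [∀ k, Finite (X k)] [∀ k, Nonempty (X k)]
    (res : ∀ k, X (k + 1) → X k) :
    ∃ f : ∀ k, X k, ∀ k, res k (f (k + 1)) = f k := by
  let F : ℕᵒᵖ ⥤ Type v := Functor.ofOpSequence (X := X) (fun n => TypeCat.ofHom (res n))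
  have h1 : ∀ j : ℕᵒᵖ, Finite (F.obj j) := fun j => by
    show Finite (X j.unop); infer_instance
  have h2 : ∀ j : ℕᵒᵖ, Nonempty (F.obj j) := fun j => by
    show Nonempty (X j.unop); infer_instance
  obtain ⟨u, hu⟩ := nonempty_sections_of_finite_inverse_system F
  refine ⟨fun k => u ⟨k⟩, fun k => ?_⟩
  have := hu (j := ⟨k + 1⟩) (j' := ⟨k⟩) ((homOfLE (Nat.le_add_right k 1)).op)
  simp only [F] at this
  have h3 := Functor.ofOpSequence_map_homOfLE_succ (C := Type v) (X := X) (fun n => TypeCat.ofHom (res n)) k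
  rw [h3] at this
  exact this

end Konig

section Build
variable {L : Language} {M : Type u} [L.Structure M]

/-- The orbit equivalence relation on `k`-tuples. -/
def orbSetoid (L : Language) (M : Type u) [L.Structure M] (k : ℕ) : Setoid (Fin k → M) where
  r u v := ∃ α : M ≃[L] M, ⇑α ∘ u = v
  iseqv := by
    refine ⟨fun u => ⟨FirstOrder.Language.Equiv.refl L M, rfl⟩, ?_, ?_⟩
    · rintro u v ⟨α, rfl⟩
      exact ⟨α.symm, funext fun i => α.symm_apply_apply (u i)⟩
    · rintro u v w ⟨α, rfl⟩ ⟨β, rfl⟩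
      exact ⟨β.comp α, funext fun i => (β.comp_apply α (u i)).symm⟩

lemma finite_quotient_orbSetoid (hM : Oligomorphic L M) (k : ℕ) :
    Finite (Quotient (orbSetoid L M k)) := by
  obtain ⟨F, hFfin, hcov⟩ := hM k
  haveI := hFfin.to_subtype
  refine Finite.of_surjective (fun t : F => (⟦t.1⟧ : Quotient (orbSetoid L M k))) ?_
  intro q
  induction q using Quotient.ind with
  | _ u =>
      obtain ⟨t, htF, α, hα⟩ := hcov u
      exact ⟨⟨t, htF⟩, Quotient.sound ⟨α, funext hα⟩⟩

variable {n : ℕ} (a : Fin n → M) (e : ℕ → M)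

/-- A partial map on the first `k` enumerated points which dominates the source and
all whose `n`-subtuples escape the positive type of `a`. -/
def GoodMap (k : ℕ) (p : Fin k → M) : Prop :=
  Dom (L := L) (fun i : Fin k => e i) p ∧
    ∀ σ : Fin n → Fin k, ∃ ρ : L.Relations n, RelMap ρ (p ∘ σ) ∧ ¬ RelMap ρ a

lemma GoodMap.equiv {k : ℕ} {p : Fin k → M} (h : GoodMap (L := L) a e k p) (α : M ≃[L] M) :
    GoodMap (L := L) a e k (⇑α ∘ p) := by
  refine ⟨h.1.trans ?_, ?_⟩
  · exact fun φ hφ hp => (realize_comp_equiv α φ p).2 hp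
  · intro σ
    obtain ⟨ρ, h1, h2⟩ := h.2 σ
    refine ⟨ρ, ?_, h2⟩
    have : ⇑α ∘ p ∘ σ = (⇑α ∘ p) ∘ σ := rfl
    rw [← this]
    exact (α.map_rel ρ (p ∘ σ)).2 h1

lemma GoodMap.restrict {k : ℕ} {p : Fin (k + 1) → M} (h : GoodMap (L := L) a e (k + 1) p) :
    GoodMap (L := L) a e k (p ∘ Fin.castSucc) := by
  constructor
  · intro φ hφ hφs
    have hEPrel : IsEP (φ.relabel (Fin.castSucc : Fin k → Fin (k + 1))) := by
      rw [Formula.relabel]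
      exact IsEP.relabel hφ
    have h1 : (φ.relabel (Fin.castSucc : Fin k → Fin (k + 1))).Realize
        (fun i : Fin (k + 1) => e i) := by
      rw [Formula.realize_relabel]
      convert hφs using 1
      rfl
    have h2 := h.1 _ hEPrel h1
    rw [Formula.realize_relabel] at h2
    exact h2
  · intro σ
    obtain ⟨ρ, h1, h2⟩ := h.2 (Fin.castSucc ∘ σ)
    exact ⟨ρ, h1, h2⟩

end Build

section Build2
variable {L : Language} {M : Type u} [L.Structure M]

lemma exists_goodMap (hM : Oligomorphic L M) (hEP : ContainsEP L M) {n : ℕ} (hn : 0 < n)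
    {a b : Fin n → M} (hab : ∀ ρ : L.Relations n, RelMap ρ a → RelMap ρ b)
    {r : L.Relations n} (hrb : RelMap r b) (hra : ¬ RelMap r a)
    (e : ℕ → M) (k : ℕ) : ∃ p, GoodMap (L := L) a e k p := by
  classical
  have domb : ∀ v : Fin n → M, (∀ ρ : L.Relations n, RelMap ρ v → RelMap ρ a) →
      Dom (L := L) v b := by
    intro v hv φ hφ hφv
    obtain ⟨rφ, hrφ⟩ := hEP n φ hφ
    exact (hrφ b).1 (hab rφ (hv rφ ((hrφ v).2 hφv)))
  set src : Fin k → M := fun i => e i with hsrc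
  let badset : (Fin k → M) → Finset (Fin n → Fin k) := fun p =>
    Finset.univ.filter (fun σ => ¬ ∃ ρ : L.Relations n, RelMap ρ (p ∘ σ) ∧ ¬ RelMap ρ a)
  have done : ∀ p : Fin k → M, Dom (L := L) src p → (badset p).card = 0 →
      ∃ q, GoodMap (L := L) a e k q := by
    intro p hp hcard
    refine ⟨p, hp, fun σ => ?_⟩
    by_contra hc
    have : σ ∈ badset p := Finset.mem_filter.2 ⟨Finset.mem_univ σ, hc⟩
    rw [Finset.card_eq_zero.1 hcard] at this
    exact absurd this (Finset.notMem_empty σ)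
  suffices h : ∀ (N : ℕ) (p : Fin k → M), Dom (L := L) src p → (badset p).card ≤ N →
      ∃ q, GoodMap (L := L) a e k q by
    exact h (badset src).card src (Dom.refl src) le_rfl
  intro N
  induction N with
  | zero => exact fun p hp hcard => done p hp (Nat.le_zero.1 hcard)
  | succ N ih =>
      intro p hp hcard
      by_cases h0 : (badset p).card = 0
      · exact done p hp h0
      · obtain ⟨σ, hσmem⟩ := Finset.card_ne_zero.1 h0
        have hσbad : ∀ ρ : L.Relations n, RelMap ρ (p ∘ σ) → RelMap ρ a := by
          have := (Finset.mem_filter.1 hσmem).2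
          push_neg at this
          exact fun ρ hρ => this ρ hρ
        obtain ⟨q, hq, hqσ⟩ := key_ext hM hn p σ b (domb _ hσbad)
        have hqb : q ∘ σ = b := funext fun i => hqσ i
        have hsub : badset q ⊆ badset p := by
          intro τ hτ
          refine Finset.mem_filter.2 ⟨Finset.mem_univ τ, ?_⟩
          have hτq := (Finset.mem_filter.1 hτ).2
          rintro ⟨ρ, h1, h2⟩
          exact hτq ⟨ρ, hq.rel ρ τ h1, h2⟩
        have hσq : σ ∉ badset q := by
          intro hmem
          exact (Finset.mem_filter.1 hmem).2 ⟨r, by rw [hqb]; exact hrb, hra⟩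
        have hlt : (badset q).card < (badset p).card :=
          Finset.card_lt_card ⟨hsub, fun hsup => hσq (hsup hσmem)⟩
        exact ih q (hp.trans hq) (by omega)

lemma exists_escape_endo [L.IsRelational] [Countable M] [Nonempty M]
    (hM : Oligomorphic L M) (hEP : ContainsEP L M) {n : ℕ} (hn : 0 < n)
    {a b : Fin n → M} (hab : ∀ ρ : L.Relations n, RelMap ρ a → RelMap ρ b)
    {r : L.Relations n} (hrb : RelMap r b) (hra : ¬ RelMap r a) :
    ∃ h : M →[L] M, ∀ u : Fin n → M, ∃ ρ : L.Relations n, RelMap ρ (⇑h ∘ u) ∧ ¬ RelMap ρ a := by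
  classical
  obtain ⟨e, he⟩ := exists_surjective_nat M
  haveI : ∀ k, Finite (Quotient (orbSetoid L M k)) := fun k => finite_quotient_orbSetoid hM k
  let X : ℕ → Type u := fun k =>
    {c : Quotient (orbSetoid L M k) //
      ∃ p, GoodMap (L := L) a e k p ∧ Quotient.mk (orbSetoid L M k) p = c}
  haveI hXfin : ∀ k, Finite (X k) := fun k => Subtype.finite
  haveI hXne : ∀ k, Nonempty (X k) := fun k => by
    obtain ⟨p, hp⟩ := exists_goodMap hM hEP hn hab hrb hra e k
    exact ⟨⟨Quotient.mk _ p, p, hp, rfl⟩⟩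
  have resp : ∀ k (p q : Fin (k + 1) → M), (orbSetoid L M (k + 1)).r p q →
      (orbSetoid L M k).r (p ∘ Fin.castSucc) (q ∘ Fin.castSucc) := by
    rintro k p q ⟨α, rfl⟩
    exact ⟨α, rfl⟩
  let res : ∀ k, X (k + 1) → X k := fun k c =>
    ⟨Quotient.map (fun p => p ∘ Fin.castSucc) (resp k) c.1, by
      obtain ⟨p, hp, hpc⟩ := c.2
      exact ⟨p ∘ Fin.castSucc, hp.restrict, by rw [← hpc]; rfl⟩⟩
  obtain ⟨f, hf⟩ := konig_sequence res
  -- realize the branch by nested good maps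
  have step : ∀ (k : ℕ) (pk : Fin k → M), GoodMap (L := L) a e k pk →
      Quotient.mk (orbSetoid L M k) pk = (f k).1 →
      ∃ pk1 : Fin (k + 1) → M, GoodMap (L := L) a e (k + 1) pk1 ∧
        Quotient.mk (orbSetoid L M (k + 1)) pk1 = (f (k + 1)).1 ∧
        pk1 ∘ Fin.castSucc = pk := by
    intro k pk hgood hclass
    obtain ⟨w, hw, hwc⟩ := (f (k + 1)).2
    have hres : Quotient.mk (orbSetoid L M k) (w ∘ Fin.castSucc) = (f k).1 := by
      have h1 : (res k (f (k + 1))).1 = (f k).1 := congrArg Subtype.val (hf k)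
      rw [← h1]
      show Quotient.mk _ (w ∘ Fin.castSucc) = Quotient.map _ (resp k) (f (k + 1)).1
      rw [← hwc]
      rfl
    obtain ⟨α, hα⟩ := Quotient.exact (hres.trans hclass.symm)
    refine ⟨⇑α ∘ w, GoodMap.equiv a e hw α, ?_, ?_⟩
    · exact (Quotient.sound ⟨α, rfl⟩ :
        Quotient.mk (orbSetoid L M (k + 1)) w = Quotient.mk _ (⇑α ∘ w)).symm.trans hwc
    · exact hα
  have base : ∃ p0 : Fin 0 → M, GoodMap (L := L) a e 0 p0 ∧
      Quotient.mk (orbSetoid L M 0) p0 = (f 0).1 := (f 0).2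
  let P : ∀ k, {p : Fin k → M // GoodMap (L := L) a e k p ∧
      Quotient.mk (orbSetoid L M k) p = (f k).1} :=
    fun k => Nat.rec ⟨Classical.choose base, Classical.choose_spec base⟩
      (fun k Pk => ⟨Classical.choose (step k Pk.1 Pk.2.1 Pk.2.2),
        (Classical.choose_spec (step k Pk.1 Pk.2.1 Pk.2.2)).1,
        (Classical.choose_spec (step k Pk.1 Pk.2.1 Pk.2.2)).2.1⟩) k
  have coh : ∀ k, (P (k + 1)).1 ∘ Fin.castSucc = (P k).1 := fun k =>
    (Classical.choose_spec (step k (P k).1 (P k).2.1 (P k).2.2)).2.2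
  have stab : ∀ (i k : ℕ) (hik : i < k), (P k).1 ⟨i, hik⟩ = (P (i + 1)).1 ⟨i, Nat.lt_succ_self i⟩ := by
    intro i k
    induction k with
    | zero => omega
    | succ k ih =>
        intro hik
        by_cases h : i < k
        · rw [← ih h]
          have := congrFun (coh k) ⟨i, h⟩
          exact this
        · have hik' : i = k := by omega
          subst hik'
          rfl
  have stab2 : ∀ (i k k' : ℕ) (hik : i < k) (hik' : i < k'),
      (P k).1 ⟨i, hik⟩ = (P k').1 ⟨i, hik'⟩ := fun i k k' hik hik' =>
    (stab i k hik).trans (stab i k' hik').symm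
  let idx : M → ℕ := fun x => Classical.choose (he x)
  have hidx : ∀ x, e (idx x) = x := fun x => Classical.choose_spec (he x)
  let h₀ : M → M := fun x => (P (idx x + 1)).1 ⟨idx x, Nat.lt_succ_self _⟩
  have heq : ∀ (k : ℕ) (i j : Fin k), e i = e j → (P k).1 i = (P k).1 j := by
    intro k i j hij
    exact ((P k).2.1.1).eq hij
  have hval : ∀ (i k : ℕ) (hik : i < k), h₀ (e i) = (P k).1 ⟨i, hik⟩ := by
    intro i k hik
    set j := idx (e i) with hj
    have hji : e j = e i := hidx (e i)
    set m := max k (j + 1) with hm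
    have hjm : j < m := by omega
    have him : i < m := by omega
    calc h₀ (e i) = (P (j + 1)).1 ⟨j, Nat.lt_succ_self j⟩ := rfl
      _ = (P m).1 ⟨j, hjm⟩ := stab2 j (j + 1) m (Nat.lt_succ_self j) hjm
      _ = (P m).1 ⟨i, him⟩ := heq m ⟨j, hjm⟩ ⟨i, him⟩ hji
      _ = (P k).1 ⟨i, hik⟩ := stab2 i m k him hik
  have hcover : ∀ (l : ℕ) (x : Fin l → M), ∃ (k : ℕ) (τ : Fin l → Fin k),
      ((fun i : Fin k => e i) ∘ τ = x) ∧ ((P k).1 ∘ τ = h₀ ∘ x) := by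
    intro l x
    set k := (Finset.univ.sup (fun j : Fin l => idx (x j))) + 1 with hk
    have hlt : ∀ j, idx (x j) < k := fun j =>
      Nat.lt_succ_of_le (Finset.le_sup (f := fun j : Fin l => idx (x j)) (Finset.mem_univ j))
    refine ⟨k, fun j => ⟨idx (x j), hlt j⟩, funext fun j => hidx (x j), funext fun j => ?_⟩
    show (P k).1 ⟨idx (x j), hlt j⟩ = h₀ (x j)
    conv_rhs => rw [← hidx (x j)]
    exact (hval (idx (x j)) k (hlt j)).symm
  have hhom : ∀ {l : ℕ} (ρ : L.Relations l) (x : Fin l → M), RelMap ρ x → RelMap ρ (h₀ ∘ x) := by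
    intro l ρ x hx
    obtain ⟨k, τ, hsrc, himg⟩ := hcover l x
    rw [← himg]
    refine ((P k).2.1.1).rel ρ τ ?_
    rw [hsrc]
    exact hx
  have hesc : ∀ u : Fin n → M, ∃ ρ : L.Relations n, RelMap ρ (h₀ ∘ u) ∧ ¬ RelMap ρ a := by
    intro u
    obtain ⟨k, τ, hsrc, himg⟩ := hcover n u
    obtain ⟨ρ, h1, h2⟩ := (P k).2.1.2 τ
    rw [himg] at h1
    exact ⟨ρ, h1, h2⟩
  exact ⟨⟨h₀, fun {l} F => isEmptyElim F, fun {l} ρ x hx => hhom ρ x hx⟩, hesc⟩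

end Build2

section MainReflect
variable {L : Language} [L.IsRelational] {M : Type u} [L.Structure M]

lemma main_reflect [Countable M] (hM : Oligomorphic L M) (hEP : ContainsEP L M)
    (c : M →[L] M) (hc : ∀ g : M →[L] M, AgeLE L ↥(Set.range c) ↥(Set.range g))
    {n : ℕ} (a b : Fin n → M) (ha : ∀ i, a i ∈ Set.range ⇑c)
    (hab : ∀ ρ : L.Relations n, RelMap ρ a → RelMap ρ b)
    (r : L.Relations n) (hrb : RelMap r b) : RelMap r a := by
  rcases Nat.eq_zero_or_pos n with hn | hn
  · subst hn
    have : a = b := Subsingleton.elim a b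
    rw [this]; exact hrb
  · by_contra hra
    haveI : Nonempty M := ⟨a ⟨0, hn⟩⟩
    obtain ⟨h, hesc⟩ := exists_escape_endo hM hEP hn hab hrb hra
    let a' : Fin n → ↥(Set.range ⇑c) := fun i => ⟨a i, ha i⟩
    obtain ⟨F, hFinj, hFrel⟩ := hc h (Set.range a') (Set.finite_range a')
    let w : Fin n → M := fun i => ↑(F (a' i))
    have hw : ∀ i, ∃ u, h u = w i := fun i => (F (a' i)).2
    choose uu huu using hw
    have hwu : ⇑h ∘ uu = w := funext huu
    obtain ⟨ρ, hρw, hρa⟩ := hesc uu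
    rw [hwu] at hρw
    refine hρa ?_
    have hiff := hFrel n ρ a' (fun i => ⟨i, rfl⟩)
    have h2 : RelMap ρ (F ∘ a') := hρw
    have h3 : RelMap ρ a' := hiff.2 h2
    exact h3
end MainReflect


theorem stmt_2 {L : Language} [L.IsRelational] {M : Type u} [L.Structure M] [Countable M]
    (hM : Oligomorphic L M) (hEP : ContainsEP L M)
    (c : M →[L] M) (hc : ∀ g : M →[L] M, AgeLE L ↥(Set.range c) ↥(Set.range g))
    {M₁ M₂ : Type u} [L.Structure M₁] [L.Structure M₂] [Countable M₁] [Countable M₂]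
    (h₁ : AgeLE L M₁ ↥(Set.range c) ∧ AgeLE L ↥(Set.range c) M₁)
    (h₂ : AgeLE L M₂ ↥(Set.range c) ∧ AgeLE L ↥(Set.range c) M₂)
    (f : M₁ →[L] M₂) :
    Function.Injective f ∧
      ∀ (n : ℕ) (r : L.Relations n) (x : Fin n → M₁), RelMap r (⇑f ∘ x) ↔ RelMap r x := by
  classical
  obtain ⟨req, hreq⟩ := hEP 2 (eqFormula 0 1) (isEP_eqFormula 0 1)
  have hreq' : ∀ x : Fin 2 → M, RelMap req x ↔ x 0 = x 1 := fun x =>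
    (hreq x).trans (realize_eqFormula 0 1 x)
  have hrefl : ∀ (n : ℕ) (r : L.Relations n) (x : Fin n → M₁), RelMap r (⇑f ∘ x) → RelMap r x := by
    intro n r x hfx
    obtain ⟨e₁, he₁inj, he₁rel⟩ := h₁.1 (Set.range x) (Set.finite_range x)
    obtain ⟨e₂, he₂inj, he₂rel⟩ := h₂.1 (Set.range (⇑f ∘ x)) (Set.finite_range _)
    set a : Fin n → M := fun i => ↑(e₁ (x i)) with hadef
    set b : Fin n → M := fun i => ↑(e₂ (f (x i))) with hbdef
    have ha : ∀ i, a i ∈ Set.range ⇑c := fun i => (e₁ (x i)).2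
    have hab : ∀ ρ : L.Relations n, RelMap ρ a → RelMap ρ b := by
      intro ρ hρ
      have hx : RelMap ρ x := by
        refine (he₁rel n ρ x (fun i => ⟨i, rfl⟩)).2 ?_
        exact hρ
      have hfx' : RelMap ρ (⇑f ∘ x) := f.map_rel ρ x hx
      have := (he₂rel n ρ (⇑f ∘ x) (fun i => ⟨i, rfl⟩)).1 hfx'
      exact this
    have hrb : RelMap r b := by
      have := (he₂rel n r (⇑f ∘ x) (fun i => ⟨i, rfl⟩)).1 hfx
      exact this
    have hra : RelMap r a := main_reflect hM hEP c hc a b ha hab r hrb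
    refine (he₁rel n r x (fun i => ⟨i, rfl⟩)).2 ?_
    exact hra
  refine ⟨?_, fun n r x => ⟨hrefl n r x, fun hx => f.map_rel r x hx⟩⟩
  intro x₁ x₂ hfeq
  set t : Fin 2 → M₁ := ![x₁, x₂] with ht
  obtain ⟨e₂, he₂inj, he₂rel⟩ := h₂.1 {f x₁} (Set.finite_singleton _)
  have hmem : ∀ i, (⇑f ∘ t) i ∈ ({f x₁} : Set M₂) := by
    intro i
    fin_cases i
    · simp [ht]
    · simp only [ht, Function.comp_apply]
      simp [← hfeq]
  have h2 : RelMap req (⇑f ∘ t) := by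
    refine (he₂rel 2 req (⇑f ∘ t) hmem).2 ?_
    have : RelMap req (fun i => (↑(e₂ ((⇑f ∘ t) i)) : M)) := by
      rw [hreq']
      have h0 : (⇑f ∘ t) 0 = f x₁ := by simp [ht]
      have h1 : (⇑f ∘ t) 1 = f x₁ := by simp [ht, ← hfeq]
      rw [h0, h1]
    exact this
  have h1 : RelMap req t := hrefl 2 req t h2
  obtain ⟨e₁, he₁inj, he₁rel⟩ := h₁.1 {x₁, x₂} ((Set.finite_singleton x₂).insert x₁)
  have hmem' : ∀ i, t i ∈ ({x₁, x₂} : Set M₁) := by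
    intro i
    fin_cases i
    · simp [ht]
    · simp [ht]
  have h3 := (he₁rel 2 req t hmem').1 h1
  have hcoord : (↑(e₁ (t 0)) : M) = ↑(e₁ (t 1)) := by
    have : RelMap req (fun i => (↑(e₁ (t i)) : M)) := h3
    rw [hreq'] at this
    exact this
  have he : e₁ (t 0) = e₁ (t 1) := Subtype.coe_injective hcoord
  have ht0 : t 0 = x₁ := rfl
  have ht1 : t 1 = x₂ := rfl
  rw [ht0, ht1] at he
  exact he₁inj (by simp) (by simp) he
end

section
/- The ω-categorical structure Γ with domain ℚ ∪ X (X a countably infinite set disjoint from ℚ), with relations x < y iff x,y ∈ ℚ and x is numerically smaller than y, x ≠ y iff x and y are distinct, and P(x) iff x ∈ ℚ and x > 0, has two cores that are not isomorphic; in particular, cores of ω-categorical structures need not be unique up to isomorphism. -/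
open FirstOrder Language Structure

universe u v w

/-- Relation symbols: a unary `P`, and binary `<` and `≠`. -/
inductive Rel3 : ℕ → Type
  | P : Rel3 1
  | lt : Rel3 2
  | ne : Rel3 2

/-- The language with one unary relation `P` and two binary relations `<` and `≠`. -/
def L3 : Language := ⟨fun _ => Empty, Rel3⟩

instance : L3.IsRelational := fun _ => inferInstanceAs (IsEmpty Empty)
/-- The structure `Γ` with domain `ℚ ⊕ X` (here `X = ℕ`): `x < y` iff both are rationals
with `x` numerically smaller, `x ≠ y` iff distinct, and `P x` iff `x` is a positive rational. -/
noncomputable instance GammaStr : L3.Structure (ℚ ⊕ ℕ) where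
  funMap := fun f _ => f.elim
  RelMap := fun r x =>
    match r with
    | .P => ∃ q : ℚ, x 0 = Sum.inl q ∧ 0 < q
    | .lt => ∃ p q : ℚ, x 0 = Sum.inl p ∧ x 1 = Sum.inl q ∧ p < q
    | .ne => x 0 ≠ x 1

namespace Stmt4Aux

open Sum

/-- order embedding piece: `(0, 1/2)` for negatives, `[c, ∞)` for nonnegatives. -/
def g (c q : ℚ) : ℚ := if q < 0 then 1/(2*(1-q)) else q + c

lemma g_range {c : ℚ} (hc : 2 ≤ c) (q : ℚ) :
    (0 < g c q ∧ g c q < 1/2) ∨ c ≤ g c q := by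
  unfold g
  split_ifs with h
  · left
    constructor
    · exact div_pos one_pos (by linarith)
    · rw [div_lt_div_iff₀ (by linarith) (by norm_num)]
      linarith
  · right; push_neg at h; linarith

lemma g_pos {c : ℚ} (hc : 2 ≤ c) (q : ℚ) : 0 < g c q := by
  rcases g_range hc q with ⟨h, _⟩ | h
  · exact h
  · linarith

lemma g_mono {c : ℚ} (hc : 2 ≤ c) {p q : ℚ} (hpq : p < q) : g c p < g c q := by
  unfold g
  split_ifs with h1 h2 h2
  · rw [div_lt_div_iff₀ (by linarith) (by linarith)]
    linarith
  · push_neg at h2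
    have : 1/(2*(1-p)) < 1/2 := by
      rw [div_lt_div_iff₀ (by linarith) (by norm_num)]
      linarith
    linarith
  · exfalso; push_neg at h1; linarith
  · linarith

lemma g_surj_small {c r : ℚ} (h0 : 0 < r) (h2 : r < 1/2) : ∃ q, g c q = r := by
  refine ⟨1 - 1/(2*r), ?_⟩
  have hlt : 1 - 1/(2*r) < 0 := by
    have : (1:ℚ) < 1/(2*r) := by
      rw [lt_div_iff₀ (by linarith)]
      linarith
    linarith
  unfold g
  rw [if_pos hlt]
  field_simp
  ring

lemma g_surj_big {c r : ℚ} (hc : 2 ≤ c) (h : c ≤ r) : ∃ q, g c q = r := by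
  refine ⟨r - c, ?_⟩
  unfold g
  rw [if_neg (by push_neg; linarith)]
  ring

/-- a bijection `ℕ ≃ ℚ ∩ (1,2)` -/
noncomputable def e12 : ℕ ≃ (Set.Ioo (1:ℚ) 2) :=
  haveI : Infinite (Set.Ioo (1:ℚ) 2) := Set.Ioo.infinite (by norm_num)
  Classical.choice nonempty_equiv_of_countable

noncomputable def F₁fun : ℚ ⊕ ℕ → ℚ ⊕ ℕ
  | .inl q => .inl (g 2 q)
  | .inr n => .inl (e12 n : ℚ)

/-- second map for ℕ part: `1, 2, 2 + 1/(n+3)` -/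
def f2n : ℕ → ℚ
  | 0 => 1
  | 1 => 2
  | (n+2) => 2 + 1/(n+3)

lemma f2n_pos (n : ℕ) : 0 < f2n n := by
  match n with
  | 0 => norm_num [f2n]
  | 1 => norm_num [f2n]
  | (n+2) => unfold f2n; positivity

lemma f2n_mem (n : ℕ) : 1 ≤ f2n n ∧ f2n n ≤ 5/2 := by
  match n with
  | 0 => norm_num [f2n]
  | 1 => norm_num [f2n]
  | (n+2) =>
    unfold f2n
    have h3 : (3:ℚ) ≤ (n:ℚ) + 3 := by
      have := Nat.cast_nonneg (α := ℚ) n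
      linarith
    have h1 : 1/((n:ℚ)+3) ≤ 1/3 := by
      rw [div_le_div_iff₀ (by linarith) (by norm_num)]
      linarith
    have h0 : 0 < 1/((n:ℚ)+3) := by positivity
    constructor <;> linarith

lemma f2n_not_mid (n : ℕ) : ¬ (1 < f2n n ∧ f2n n < 2) := by
  match n with
  | 0 => norm_num [f2n]
  | 1 => norm_num [f2n]
  | (n+2) =>
    unfold f2n
    have h0 : 0 < 1/((n:ℚ)+3) := by positivity
    rintro ⟨-, h⟩
    linarith

lemma f2n_inj : Function.Injective f2n := by
  intro m n h
  match m, n with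
  | 0, 0 => rfl
  | 1, 1 => rfl
  | 0, 1 => norm_num [f2n] at h
  | 1, 0 => norm_num [f2n] at h
  | 0, (n+2) =>
    exfalso
    have h0 : 0 < 1/((n:ℚ)+3) := by positivity
    simp only [f2n] at h
    linarith [h.symm ▸ h0]
  | (n+2), 0 =>
    exfalso
    have h0 : 0 < 1/((n:ℚ)+3) := by positivity
    simp only [f2n] at h
    linarith
  | 1, (n+2) =>
    exfalso
    have h0 : 0 < 1/((n:ℚ)+3) := by positivity
    simp only [f2n] at h
    linarith
  | (n+2), 1 =>
    exfalso
    have h0 : 0 < 1/((n:ℚ)+3) := by positivity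
    simp only [f2n] at h
    linarith
  | (m+2), (n+2) =>
    simp only [f2n, add_right_inj] at h
    have hm : (0:ℚ) < (m:ℚ) + 3 := by positivity
    have hn : (0:ℚ) < (n:ℚ) + 3 := by positivity
    rw [div_eq_div_iff hm.ne' hn.ne'] at h
    have hmn : (m:ℚ) = (n:ℚ) := by linarith
    have : m = n := by exact_mod_cast hmn
    rw [this]

def F₂fun : ℚ ⊕ ℕ → ℚ ⊕ ℕ
  | .inl q => .inl (g 3 q)
  | .inr n => .inl (f2n n)

lemma F₁_pos : ∀ x ∈ Set.range F₁fun, ∃ q : ℚ, x = Sum.inl q ∧ 0 < q := by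
  rintro x ⟨y, rfl⟩
  match y with
  | .inl q => exact ⟨g 2 q, rfl, g_pos le_rfl q⟩
  | .inr n => exact ⟨(e12 n : ℚ), rfl, lt_trans one_pos (e12 n).2.1⟩

lemma F₂_pos : ∀ x ∈ Set.range F₂fun, ∃ q : ℚ, x = Sum.inl q ∧ 0 < q := by
  rintro x ⟨y, rfl⟩
  match y with
  | .inl q => exact ⟨g 3 q, rfl, g_pos (by norm_num) q⟩
  | .inr n => exact ⟨f2n n, rfl, f2n_pos n⟩

lemma F₁_inj : Function.Injective F₁fun := by
  intro x y h
  match x, y with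
  | .inl p, .inl q =>
    simp only [F₁fun, Sum.inl.injEq] at h
    rcases lt_trichotomy p q with h' | h' | h'
    · exact absurd h (ne_of_lt (g_mono le_rfl h'))
    · rw [h']
    · exact absurd h.symm (ne_of_lt (g_mono le_rfl h'))
  | .inl p, .inr n =>
    exfalso
    simp only [F₁fun, Sum.inl.injEq] at h
    rcases g_range (le_refl (2:ℚ)) p with ⟨_, h2⟩ | h2 <;>
      [ exact absurd (h ▸ (e12 n).2.1) (by rw [h]; linarith [(e12 n).2.1, (e12 n).2.2]);
        exact absurd (h ▸ (e12 n).2.2) (by rw [h]; linarith [(e12 n).2.1, (e12 n).2.2]) ]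
  | .inr n, .inl p =>
    exfalso
    simp only [F₁fun, Sum.inl.injEq] at h
    rcases g_range (le_refl (2:ℚ)) p with ⟨_, h2⟩ | h2
    · linarith [(e12 n).2.1, h ▸ h2]
    · linarith [(e12 n).2.2, h ▸ h2]
  | .inr m, .inr n =>
    simp only [F₁fun, Sum.inl.injEq] at h
    have := e12.injective (Subtype.ext h)
    rw [this]

lemma F₂_inj : Function.Injective F₂fun := by
  intro x y h
  match x, y with
  | .inl p, .inl q =>
    simp only [F₂fun, Sum.inl.injEq] at h
    rcases lt_trichotomy p q with h' | h' | h'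
    · exact absurd h (ne_of_lt (g_mono (by norm_num) h'))
    · rw [h']
    · exact absurd h.symm (ne_of_lt (g_mono (by norm_num) h'))
  | .inl p, .inr n =>
    exfalso
    simp only [F₂fun, Sum.inl.injEq] at h
    obtain ⟨hn1, hn2⟩ := f2n_mem n
    rcases g_range (by norm_num : (2:ℚ) ≤ 3) p with ⟨_, h2⟩ | h2 <;> rw [h] at h2 <;> linarith
  | .inr n, .inl p =>
    exfalso
    simp only [F₂fun, Sum.inl.injEq] at h
    obtain ⟨hn1, hn2⟩ := f2n_mem n
    rcases g_range (by norm_num : (2:ℚ) ≤ 3) p with ⟨_, h2⟩ | h2 <;> rw [← h] at h2 <;> linarith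
  | .inr m, .inr n =>
    simp only [F₂fun, Sum.inl.injEq] at h
    rw [f2n_inj h]

lemma mem_range_F₁ (r : ℚ) :
    Sum.inl r ∈ Set.range F₁fun ↔ ((0 < r ∧ r < 1/2) ∨ 1 < r) := by
  constructor
  · rintro ⟨y, hy⟩
    match y with
    | .inl q =>
      simp only [F₁fun, Sum.inl.injEq] at hy
      rcases g_range (le_refl (2:ℚ)) q with h | h
      · left; rw [← hy]; exact h
      · right; rw [← hy]; linarith
    | .inr n =>
      simp only [F₁fun, Sum.inl.injEq] at hy
      right; rw [← hy]; exact (e12 n).2.1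
  · rintro (⟨h0, h2⟩ | h1)
    · obtain ⟨q, hq⟩ := g_surj_small (c := 2) h0 h2
      exact ⟨.inl q, by simp [F₁fun, hq]⟩
    · rcases lt_or_ge r 2 with hr | hr
      · refine ⟨.inr (e12.symm ⟨r, h1, hr⟩), ?_⟩
        simp [F₁fun]
      · obtain ⟨q, hq⟩ := g_surj_big (le_refl (2:ℚ)) hr
        exact ⟨.inl q, by simp [F₁fun, hq]⟩

lemma F₂_not_mid (r : ℚ) (hr : Sum.inl r ∈ Set.range F₂fun) : ¬ (1 < r ∧ r < 2) := by
  obtain ⟨y, hy⟩ := hr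
  match y with
  | .inl q =>
    simp only [F₂fun, Sum.inl.injEq] at hy
    rcases g_range (by norm_num : (2:ℚ) ≤ 3) q with ⟨_, h2⟩ | h2 <;> rw [hy] at h2 <;>
      · rintro ⟨a, b⟩; linarith
  | .inr n =>
    simp only [F₂fun, Sum.inl.injEq] at hy
    rw [← hy]
    exact f2n_not_mid n

lemma dense₁ {p q : ℚ} (hp : Sum.inl p ∈ Set.range F₁fun) (hq : Sum.inl q ∈ Set.range F₁fun)
    (hpq : p < q) : ∃ r, Sum.inl r ∈ Set.range F₁fun ∧ p < r ∧ r < q := by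
  rw [mem_range_F₁] at hp hq
  rcases hp with ⟨hp0, hp2⟩ | hp1
  · rcases hq with ⟨hq0, hq2⟩ | hq1
    · exact ⟨(p+q)/2, (mem_range_F₁ _).2 (Or.inl ⟨by linarith, by linarith⟩),
        by linarith, by linarith⟩
    · exact ⟨(2*p+1)/4, (mem_range_F₁ _).2 (Or.inl ⟨by linarith, by linarith⟩),
        by linarith, by linarith⟩
  · exact ⟨(p+q)/2, (mem_range_F₁ _).2 (Or.inr (by linarith)), by linarith, by linarith⟩

/-- homomorphism packaging -/
noncomputable def mkHom (F : ℚ ⊕ ℕ → ℚ ⊕ ℕ)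
    (hpos : ∀ x ∈ Set.range F, ∃ q : ℚ, x = Sum.inl q ∧ 0 < q)
    (hinj : Function.Injective F)
    (hmono : ∀ p q : ℚ, p < q → ∃ p' q' : ℚ, F (.inl p) = .inl p' ∧ F (.inl q) = .inl q' ∧
      p' < q') : (ℚ ⊕ ℕ) →[L3] (ℚ ⊕ ℕ) where
  toFun := F
  map_fun' := fun f _ => isEmptyElim f
  map_rel' := by
    intro n r x hr
    cases r with
    | P =>
      obtain ⟨q, hq, hq0⟩ := hr
      obtain ⟨q', hq', hq'0⟩ := hpos (F (x 0)) ⟨x 0, rfl⟩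
      exact ⟨q', hq', hq'0⟩
    | lt =>
      obtain ⟨p, q, hp, hq, hlt⟩ := hr
      obtain ⟨p', q', h1, h2, h3⟩ := hmono p q hlt
      refine ⟨p', q', ?_, ?_, h3⟩
      · show F (x 0) = _; rw [hp]; exact h1
      · show F (x 1) = _; rw [hq]; exact h2
    | ne =>
      intro hFx
      exact hr (hinj hFx)

lemma range_pos_mono {F : ℚ ⊕ ℕ → ℚ ⊕ ℕ} {c : ℚ} (hc : 2 ≤ c)
    (hF : ∀ q : ℚ, F (.inl q) = .inl (g c q)) :
    ∀ p q : ℚ, p < q → ∃ p' q' : ℚ, F (.inl p) = .inl p' ∧ F (.inl q) = .inl q' ∧ p' < q' :=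
  fun p q hpq => ⟨g c p, g c q, hF p, hF q, g_mono hc hpq⟩

noncomputable def c₁ : (ℚ ⊕ ℕ) →[L3] (ℚ ⊕ ℕ) :=
  mkHom F₁fun F₁_pos F₁_inj (range_pos_mono le_rfl (fun _ => rfl))

noncomputable def c₂ : (ℚ ⊕ ℕ) →[L3] (ℚ ⊕ ℕ) :=
  mkHom F₂fun F₂_pos F₂_inj (range_pos_mono (by norm_num) (fun _ => rfl))

lemma c₁_coe : ⇑c₁ = F₁fun := rfl
lemma c₂_coe : ⇑c₂ = F₂fun := rfl

/-- key: any subset all of whose elements are positive rationals is a core. -/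
lemma isCore_of_pos (s : Set (ℚ ⊕ ℕ))
    (hs : ∀ x ∈ s, ∃ q : ℚ, x = Sum.inl q ∧ 0 < q) : IsCore L3 ↥s := by
  intro e
  have hrel : ∀ {n} (r : L3.Relations n) (x : Fin n → s),
      RelMap r x → RelMap r (⇑e ∘ x) := fun r x h => e.map_rel r x h
  have hinj : Function.Injective e := by
    intro a b hab
    by_contra hne
    have h1 : RelMap (L := L3) (Rel3.ne : L3.Relations 2) ![a, b] := by
      show (↑(![a,b] 0) : ℚ ⊕ ℕ) ≠ ↑(![a,b] 1)
      simpa using fun h => hne (Subtype.ext h)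
    have h2 := hrel (Rel3.ne : L3.Relations 2) ![a, b] h1
    refine h2 ?_
    show (↑(e (![a,b] 0)) : ℚ ⊕ ℕ) = ↑(e (![a,b] 1))
    simp [hab]
  refine ⟨hinj, ?_⟩
  intro n r x
  cases r with
  | P =>
    obtain ⟨q, hq, h0⟩ := hs (↑(x 0)) (x 0).2
    obtain ⟨q', hq', h0'⟩ := hs (↑(e (x 0))) (e (x 0)).2
    exact iff_of_true ⟨q', hq', h0'⟩ ⟨q, hq, h0⟩
  | lt =>
    constructor
    · rintro ⟨p', q', hp', hq', hlt'⟩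
      simp only [Function.comp_apply] at hp' hq'
      obtain ⟨p, hp, _⟩ := hs (↑(x 0)) (x 0).2
      obtain ⟨q, hq, _⟩ := hs (↑(x 1)) (x 1).2
      refine ⟨p, q, hp, hq, ?_⟩
      rcases lt_trichotomy p q with h | h | h
      · exact h
      · exfalso
        have : x 0 = x 1 := Subtype.ext (by rw [hp, hq, h])
        have : e (x 0) = e (x 1) := by rw [this]
        have h01 : (↑(e (x 0)) : ℚ ⊕ ℕ) = ↑(e (x 1)) := by rw [this]
        rw [hp', hq'] at h01
        have : p' = q' := Sum.inl_injective h01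
        linarith
      · exfalso
        have h1 : RelMap (L := L3) (Rel3.lt : L3.Relations 2) ![x 1, x 0] := ⟨q, p, by simpa using hq,
          by simpa using hp, h⟩
        obtain ⟨a, b, ha, hb, hab⟩ := hrel (Rel3.lt : L3.Relations 2) ![x 1, x 0] h1
        simp only [Function.comp_apply, Matrix.cons_val_zero, Matrix.cons_val_one,
          Matrix.head_cons] at ha hb
        have hqa : q' = a := Sum.inl_injective ((hq'.symm.trans ha : _))
        have hpb : p' = b := Sum.inl_injective ((hp'.symm.trans hb : _))
        rw [hqa, hpb] at hlt'
        linarith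
    · exact hrel (Rel3.lt : L3.Relations 2) x
  | ne =>
    constructor
    · intro h heq
      apply h
      show (↑(e (x 0)) : ℚ ⊕ ℕ) = ↑(e (x 1))
      have hx : x 0 = x 1 := Subtype.ext heq
      rw [hx]
    · exact hrel (Rel3.ne : L3.Relations 2) x

end Stmt4Aux

theorem stmt_4 :
    ∃ c₁ c₂ : (ℚ ⊕ ℕ) →[L3] (ℚ ⊕ ℕ),
      IsCore L3 ↥(Set.range c₁) ∧ IsCore L3 ↥(Set.range c₂) ∧
        IsEmpty (↥(Set.range c₁) ≃[L3] ↥(Set.range c₂)) := by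
  refine ⟨Stmt4Aux.c₁, Stmt4Aux.c₂,
    Stmt4Aux.isCore_of_pos _ Stmt4Aux.F₁_pos,
    Stmt4Aux.isCore_of_pos _ Stmt4Aux.F₂_pos, ?_⟩
  constructor
  intro α
  have mem1 : (Sum.inl (1:ℚ) : ℚ ⊕ ℕ) ∈ Set.range ⇑Stmt4Aux.c₂ := ⟨Sum.inr 0, rfl⟩
  have mem2 : (Sum.inl (2:ℚ) : ℚ ⊕ ℕ) ∈ Set.range ⇑Stmt4Aux.c₂ := ⟨Sum.inr 1, rfl⟩
  set a := α.symm ⟨Sum.inl 1, mem1⟩ with ha_def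
  set b := α.symm ⟨Sum.inl 2, mem2⟩ with hb_def
  have hαa : α a = ⟨Sum.inl 1, mem1⟩ := α.apply_symm_apply _
  have hαb : α b = ⟨Sum.inl 2, mem2⟩ := α.apply_symm_apply _
  obtain ⟨pa, hpa, _⟩ := Stmt4Aux.F₁_pos ↑a a.2
  obtain ⟨pb, hpb, _⟩ := Stmt4Aux.F₁_pos ↑b b.2
  have hab : RelMap (L := L3) (Rel3.lt : L3.Relations 2) (⇑α ∘ ![a, b]) := by
    show ∃ p q : ℚ, (↑(α (![a, b] 0)) : ℚ ⊕ ℕ) = Sum.inl p ∧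
      (↑(α (![a, b] 1)) : ℚ ⊕ ℕ) = Sum.inl q ∧ p < q
    refine ⟨1, 2, ?_, ?_, one_lt_two⟩
    · simp [hαa]
    · simp [hαb]
  have hab' := (α.map_rel Rel3.lt ![a, b]).1 hab
  obtain ⟨p, q, hp, hq, hpq⟩ := hab'
  simp only [Matrix.cons_val_zero, Matrix.cons_val_one, Matrix.head_cons] at hp hq
  have hpa' : pa = p := Sum.inl_injective (hpa.symm.trans hp)
  have hpb' : pb = q := Sum.inl_injective (hpb.symm.trans hq)
  have hpapb : pa < pb := by rw [hpa', hpb']; exact hpq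
  have hmema : Sum.inl pa ∈ Set.range Stmt4Aux.F₁fun := hpa ▸ a.2
  have hmemb : Sum.inl pb ∈ Set.range Stmt4Aux.F₁fun := hpb ▸ b.2
  obtain ⟨r, hrmem, hr1, hr2⟩ := Stmt4Aux.dense₁ hmema hmemb hpapb
  let z : ↥(Set.range ⇑Stmt4Aux.c₁) := ⟨Sum.inl r, hrmem⟩
  have h1 : RelMap (L := L3) (Rel3.lt : L3.Relations 2) (![a, z] : Fin 2 → ↥(Set.range ⇑Stmt4Aux.c₁)) := by
    show ∃ p q : ℚ, (↑(![a, z] 0) : ℚ ⊕ ℕ) = Sum.inl p ∧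
      (↑(![a, z] 1) : ℚ ⊕ ℕ) = Sum.inl q ∧ p < q
    exact ⟨pa, r, by simpa using hpa, rfl, hr1⟩
  have h2 : RelMap (L := L3) (Rel3.lt : L3.Relations 2) (![z, b] : Fin 2 → ↥(Set.range ⇑Stmt4Aux.c₁)) := by
    show ∃ p q : ℚ, (↑(![z, b] 0) : ℚ ⊕ ℕ) = Sum.inl p ∧
      (↑(![z, b] 1) : ℚ ⊕ ℕ) = Sum.inl q ∧ p < q
    exact ⟨r, pb, rfl, by simpa using hpb, hr2⟩
  obtain ⟨p1, q1, hp1, hq1, hlt1⟩ := (α.map_rel Rel3.lt ![a, z]).2 h1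
  obtain ⟨p2, q2, hp2, hq2, hlt2⟩ := (α.map_rel Rel3.lt ![z, b]).2 h2
  simp only [Function.comp_apply, Matrix.cons_val_zero, Matrix.cons_val_one,
    Matrix.head_cons] at hp1 hq1 hp2 hq2
  rw [hαa] at hp1
  rw [hαb] at hq2
  have hp1' : p1 = 1 := (Sum.inl_injective hp1).symm
  have hq2' : q2 = 2 := (Sum.inl_injective hq2).symm
  have hzz : q1 = p2 := Sum.inl_injective (hq1.symm.trans hp2)
  have : 1 < q1 ∧ q1 < 2 := ⟨hp1' ▸ hlt1, by rw [hzz, ← hq2']; exact hlt2⟩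
  exact Stmt4Aux.F₂_not_mid q1 (hq1 ▸ (α z).2) this
end

section
/- Let Γ be an ω-categorical relational structure containing all relations definable in it by existential positive formulas. Then Γ is homomorphically equivalent to a homogeneous core Γᶜ, which is unique up to isomorphism; moreover Γᶜ is finite or ω-categorical. -/
open FirstOrder Language Structure

universe u v w

namespace Bod

open Fin FirstOrder.Language FirstOrder.Language.BoundedFormula

variable {L : Language} {M : Type u} [L.Structure M]

/-- EP formulas are preserved by homomorphisms. -/
theorem IsEP.realize_hom {N : Type v} [L.Structure N] {α : Type w} {n : ℕ}
    {φ : L.BoundedFormula α n} (h : IsEP φ) (f : M →[L] N) :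
    ∀ (v : α → M) (w : Fin n → M), φ.Realize v w → φ.Realize (⇑f ∘ v) (⇑f ∘ w) := by
  induction h with
  | equal t₁ t₂ =>
    intro v w hr
    rw [BoundedFormula.realize_bdEqual] at hr ⊢
    rw [← Sum.comp_elim, HomClass.realize_term, HomClass.realize_term, hr]
  | rel R ts =>
    intro v w hr
    rw [BoundedFormula.realize_rel] at hr ⊢
    have : (fun i => Term.realize (Sum.elim (⇑f ∘ v) (⇑f ∘ w)) (ts i)) =
        ⇑f ∘ (fun i => Term.realize (Sum.elim v w) (ts i)) := by
      funext i
      rw [← Sum.comp_elim, HomClass.realize_term]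
      rfl
    rw [this]
    exact f.map_rel' R _ hr
  | inf h1 h2 ih1 ih2 =>
    intro v w hr
    rw [BoundedFormula.realize_inf] at hr ⊢
    exact ⟨ih1 v w hr.1, ih2 v w hr.2⟩
  | sup h1 h2 ih1 ih2 =>
    intro v w hr
    rw [BoundedFormula.realize_sup] at hr ⊢
    exact hr.imp (ih1 v w) (ih2 v w)
  | ex h ih =>
    intro v w hr
    rw [BoundedFormula.realize_ex] at hr ⊢
    obtain ⟨x, hx⟩ := hr
    exact ⟨f x, by rw [← Fin.comp_snoc]; exact ih v _ hx⟩

/-- EP-ness is preserved by relabeling. -/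
theorem IsEP.relabel {α : Type w} {β : Type w} {m : ℕ} {k : ℕ}
    {φ : L.BoundedFormula α k} (h : IsEP φ) (g : α → β ⊕ Fin m) :
    IsEP (φ.relabel g) := by
  induction h with
  | equal t₁ t₂ => exact IsEP.equal _ _
  | rel R ts => exact IsEP.rel _ _
  | inf h1 h2 ih1 ih2 => exact IsEP.inf ih1 ih2
  | sup h1 h2 ih1 ih2 => exact IsEP.sup ih1 ih2
  | ex h ih => rw [relabel_ex]; exact IsEP.ex ih

theorem IsEP.relabelFormula {α β : Type w} {φ : L.Formula α} (h : IsEP φ) (g : α → β) :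
    IsEP (φ.relabel g) :=
  IsEP.relabel h _

/-- `SubEP L x y`: every EP formula true of the tuple `x` is true of `y`. -/
def SubEP (L : Language) {M : Type u} [L.Structure M] {n : ℕ} (x y : Fin n → M) : Prop :=
  ∀ φ : L.Formula (Fin n), IsEP φ → φ.Realize x → φ.Realize y

/-- EP-equivalence of tuples. -/
def EqEP (L : Language) {M : Type u} [L.Structure M] {n : ℕ} (x y : Fin n → M) : Prop :=
  SubEP L x y ∧ SubEP L y x

theorem SubEP.refl {n : ℕ} (x : Fin n → M) : SubEP L x x := fun _ _ h => h

theorem SubEP.trans {n : ℕ} {x y z : Fin n → M} (h1 : SubEP L x y) (h2 : SubEP L y z) :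
    SubEP L x z := fun φ hφ hr => h2 φ hφ (h1 φ hφ hr)

theorem EqEP.refl {n : ℕ} (x : Fin n → M) : EqEP L x x := ⟨SubEP.refl x, SubEP.refl x⟩

theorem EqEP.symm {n : ℕ} {x y : Fin n → M} (h : EqEP L x y) : EqEP L y x := ⟨h.2, h.1⟩

theorem EqEP.trans {n : ℕ} {x y z : Fin n → M} (h1 : EqEP L x y) (h2 : EqEP L y z) :
    EqEP L x z := ⟨h1.1.trans h2.1, h2.2.trans h1.2⟩

/-- Reindexing: `SubEP` is preserved under composing with an index map. -/
theorem SubEP.reindex {m n : ℕ} {x y : Fin n → M} (h : SubEP L x y) (σ : Fin m → Fin n) :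
    SubEP L (x ∘ σ) (y ∘ σ) := by
  intro φ hφ hr
  have h1 : (φ.relabel σ).Realize x := by rw [Formula.realize_relabel]; exact hr
  have h2 := h _ (IsEP.relabelFormula hφ σ) h1
  rw [Formula.realize_relabel] at h2
  exact h2

theorem EqEP.reindex {m n : ℕ} {x y : Fin n → M} (h : EqEP L x y) (σ : Fin m → Fin n) :
    EqEP L (x ∘ σ) (y ∘ σ) := ⟨h.1.reindex σ, h.2.reindex σ⟩

/-- Equality-extraction from `SubEP`. -/
theorem SubEP.eq_of_eq {n : ℕ} {x y : Fin n → M} (h : SubEP L x y) {i j : Fin n}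
    (hij : x i = x j) : y i = y j := by
  classical
  have hφ : IsEP ((Term.var (Sum.inl i) : L.Term (Fin n ⊕ Fin 0)).bdEqual
      (Term.var (Sum.inl j))) := IsEP.equal _ _
  have h1 : Formula.Realize (M := M) ((Term.var (Sum.inl i) : L.Term (Fin n ⊕ Fin 0)).bdEqual
      (Term.var (Sum.inl j)) : L.Formula (Fin n)) x := by
    simp only [Formula.Realize, BoundedFormula.realize_bdEqual, Term.realize_var, Sum.elim_inl]
    exact hij
  have h2 := h _ hφ h1
  simpa only [Formula.Realize, BoundedFormula.realize_bdEqual, Term.realize_var,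
    Sum.elim_inl] using h2

/-- Relation-extraction from `SubEP`. -/
theorem SubEP.relMap {m n : ℕ} {x y : Fin n → M} (h : SubEP L x y) {r : L.Relations m}
    {σ : Fin m → Fin n} (hr : RelMap r (x ∘ σ)) : RelMap r (y ∘ σ) := by
  have hφ : IsEP (r.boundedFormula (fun i => (Term.var (Sum.inl (σ i)) : L.Term (Fin n ⊕ Fin 0)))) :=
    IsEP.rel _ _
  have h1 : Formula.Realize (M := M) (r.boundedFormula
      (fun i => (Term.var (Sum.inl (σ i)) : L.Term (Fin n ⊕ Fin 0))) : L.Formula (Fin n)) x := by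
    simp only [Formula.Realize, BoundedFormula.realize_rel, Term.realize_var, Sum.elim_inl]
    exact hr
  have h2 := h _ hφ h1
  simp only [Formula.Realize, BoundedFormula.realize_rel, Term.realize_var, Sum.elim_inl] at h2
  exact h2

/-- Automorphism-invariance of EP types. -/
theorem eqEP_of_equiv {n : ℕ} (α : M ≃[L] M) (x : Fin n → M) : EqEP L x (⇑α ∘ x) := by
  constructor <;> intro φ _ hr
  · rwa [StrongHomClass.realize_formula α] 
  · rwa [StrongHomClass.realize_formula α] at hr

/-- Finitely many EP-types: a finite list of representatives. -/
theorem exists_reps (hM : Oligomorphic L M) (n : ℕ) :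
    ∃ T : List (Fin n → M), ∀ t : Fin n → M, ∃ s ∈ T, EqEP L s t := by
  obtain ⟨F, hF, hcov⟩ := hM n
  refine ⟨hF.toFinset.toList, fun t => ?_⟩
  obtain ⟨s, hs, α, hα⟩ := hcov t
  have : ⇑α ∘ s = t := funext hα
  refine ⟨s, by simp [hF.mem_toFinset, hs], ?_⟩
  rw [← this]
  exact eqEP_of_equiv α s


end Bod

section C3
namespace Bod
open Fin FirstOrder.Language FirstOrder.Language.BoundedFormula FirstOrder Language
variable {L : Language} {M : Type u} [L.Structure M]

/-- Conjunction of a list of formulas over a base formula. -/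
def conjList {α : Type w} : List (L.Formula α) → L.Formula α → L.Formula α
  | [], b => b
  | φ :: l, b => φ ⊓ conjList l b

theorem isEP_conjList {α : Type w} {l : List (L.Formula α)} {b : L.Formula α}
    (hl : ∀ φ ∈ l, IsEP φ) (hb : IsEP b) : IsEP (conjList l b) := by
  induction l with
  | nil => exact hb
  | cons φ l ih =>
    exact IsEP.inf (hl φ (by simp)) (ih fun ψ h => hl ψ (by simp [h]))

theorem realize_conjList {α : Type w} {l : List (L.Formula α)} {b : L.Formula α} {x : α → M} :
    (conjList l b).Realize x ↔ (∀ φ ∈ l, φ.Realize x) ∧ b.Realize x := by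
  induction l with
  | nil => simp [conjList]
  | cons φ l ih =>
    simp only [conjList, Formula.realize_inf, ih, List.mem_cons]
    constructor
    · rintro ⟨h1, h2, h3⟩
      exact ⟨fun ψ h => h.elim (fun e => e ▸ h1) (h2 ψ), h3⟩
    · rintro ⟨h1, h2⟩
      exact ⟨h1 φ (Or.inl rfl), fun ψ h => h1 ψ (Or.inr h), h2⟩

/-- Existentially quantify the last free variable of a formula. -/
def exQuantify {k : ℕ} (φ : L.Formula (Fin (k + 1))) : L.Formula (Fin k) :=
  BoundedFormula.ex
    (BoundedFormula.relabel (Fin.lastCases (Sum.inr 0) Sum.inl : Fin (k+1) → Fin k ⊕ Fin 1) φ)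

theorem isEP_exQuantify {k : ℕ} {φ : L.Formula (Fin (k + 1))} (h : IsEP φ) :
    IsEP (exQuantify φ) :=
  IsEP.ex (IsEP.relabel h _)

theorem realize_exQuantify {k : ℕ} {φ : L.Formula (Fin (k + 1))} {x : Fin k → M} :
    (exQuantify φ).Realize x ↔ ∃ b, φ.Realize (Fin.snoc x b) := by
  have e1 : ∀ b : M,
      (Sum.elim x ((Fin.snoc (default : Fin 0 → M) b : Fin (0+1) → M) ∘ Fin.castAdd 0) ∘
        (Fin.lastCases (Sum.inr 0) Sum.inl : Fin (k+1) → Fin k ⊕ Fin 1)) = Fin.snoc x b := by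
    intro b
    funext i
    refine Fin.lastCases ?_ (fun j => ?_) i
    · rw [Function.comp_apply, Fin.lastCases_last, Fin.snoc_last]
      rw [Sum.elim_inr, Function.comp_apply]
      have e : (Fin.castAdd 0 (0 : Fin 1)) = Fin.last 0 := by
        apply Fin.ext; rfl
      rw [e, Fin.snoc_last]
    · rw [Function.comp_apply, Fin.lastCases_castSucc, Fin.snoc_castSucc]
      rfl
  rw [exQuantify, Formula.Realize, BoundedFormula.realize_ex]
  constructor
  · rintro ⟨b, hb⟩
    rw [BoundedFormula.realize_relabel] at hb
    rw [Subsingleton.elim ((Fin.snoc (default : Fin 0 → M) b : Fin (0+1) → M) ∘ Fin.natAdd 1)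
      (default : Fin 0 → M)] at hb
    rw [e1 b] at hb
    exact ⟨b, hb⟩
  · rintro ⟨b, hb⟩
    refine ⟨b, ?_⟩
    rw [BoundedFormula.realize_relabel]
    rw [Subsingleton.elim ((Fin.snoc (default : Fin 0 → M) b : Fin (0+1) → M) ∘ Fin.natAdd 1)
      (default : Fin 0 → M)]
    rw [e1 b]
    exact hb

/-- The fundamental extension lemma: EP-domination extends over one more element. -/
theorem subEP_snoc_extend [Nonempty M] (hM : Oligomorphic L M) {k : ℕ} {u v : Fin k → M}
    (h : SubEP L u v) (a : M) : ∃ b, SubEP L (Fin.snoc u a) (Fin.snoc v b) := by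
  classical
  by_contra hc
  push_neg at hc
  have hc' : ∀ b : M, ∃ φ : L.Formula (Fin (k+1)),
      IsEP φ ∧ φ.Realize (Fin.snoc u a) ∧ ¬ φ.Realize (Fin.snoc v b) := by
    intro b
    have h1 := hc b
    unfold SubEP at h1
    push_neg at h1
    obtain ⟨φ, h1, h2, h3⟩ := h1
    exact ⟨φ, h1, h2, h3⟩
  choose Φ hΦEP hΦu hΦv using hc'
  obtain ⟨T, hT⟩ := exists_reps hM (k+1)
  set S : List (Fin (k+1) → M) :=
    T.filter (fun s => decide (∃ b, EqEP L s (Fin.snoc v b))) with hS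
  have memS : ∀ s, s ∈ S ↔ s ∈ T ∧ ∃ b, EqEP L s (Fin.snoc v b) := by
    intro s
    simp [hS, List.mem_filter]
  set bfn : (Fin (k+1) → M) → M := fun s =>
    if h : ∃ b, EqEP L s (Fin.snoc v b) then h.choose else Classical.arbitrary M with hbfn
  have hbfn_spec : ∀ s, (∃ b, EqEP L s (Fin.snoc v b)) → EqEP L s (Fin.snoc v (bfn s)) := by
    intro s hs
    rw [hbfn]
    simp only [dif_pos hs]
    exact hs.choose_spec
  set base : L.Formula (Fin (k+1)) :=
    (Term.var (Sum.inl 0) : L.Term (Fin (k+1) ⊕ Fin 0)).bdEqual (Term.var (Sum.inl 0)) with hbase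
  set lst : List (L.Formula (Fin (k+1))) := S.map (fun s => Φ (bfn s)) with hlst
  set χ : L.Formula (Fin (k+1)) := conjList lst base with hχ
  have hχEP : IsEP χ := by
    refine isEP_conjList ?_ (IsEP.equal _ _)
    intro φ hφ
    rw [hlst] at hφ
    obtain ⟨s, _, rfl⟩ := List.mem_map.1 hφ
    exact hΦEP _
  have hχu : χ.Realize (Fin.snoc u a) := by
    rw [hχ, realize_conjList]
    constructor
    · intro φ hφ
      obtain ⟨s, _, rfl⟩ := List.mem_map.1 hφ
      exact hΦu _
    · simp [hbase, Formula.Realize]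
  have hψ := h (exQuantify χ) (isEP_exQuantify hχEP)
    (realize_exQuantify.2 ⟨a, hχu⟩)
  obtain ⟨b, hχvb⟩ := realize_exQuantify.1 hψ
  obtain ⟨s, hsT, hsEq⟩ := hT (Fin.snoc v b)
  have hsS : s ∈ S := (memS s).2 ⟨hsT, ⟨b, hsEq⟩⟩
  have hmem : Φ (bfn s) ∈ lst := List.mem_map.2 ⟨s, hsS, rfl⟩
  have hreal : (Φ (bfn s)).Realize (Fin.snoc v b) := (realize_conjList.1 hχvb).1 _ hmem
  have htrans : SubEP L (Fin.snoc v b) (Fin.snoc v (bfn s)) :=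
    (hsEq.symm.trans (hbfn_spec s ⟨b, hsEq⟩)).1
  exact hΦv (bfn s) (htrans _ (hΦEP (bfn s)) hreal)

end Bod
end C3

namespace Bod
open Fin FirstOrder.Language FirstOrder.Language.BoundedFormula FirstOrder Language
variable {L : Language} {M : Type u} [L.Structure M]

theorem subEP_append_extend [Nonempty M] (hM : Oligomorphic L M) :
    ∀ {j : ℕ} (w : Fin j → M) {k : ℕ} {u v : Fin k → M},
      SubEP L u v → ∃ w' : Fin j → M, SubEP L (Fin.append u w) (Fin.append v w') := by
  intro j
  induction j with
  | zero =>
    intro w k u v h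
    refine ⟨Fin.elim0, ?_⟩
    rw [Subsingleton.elim w Fin.elim0, Fin.append_elim0, Fin.append_elim0]
    exact h.reindex _
  | succ j ih =>
    intro w k u v h
    obtain ⟨w₀', hw₀'⟩ := ih (Fin.init w) h
    obtain ⟨b, hb⟩ := subEP_snoc_extend hM hw₀' (w (Fin.last j))
    refine ⟨Fin.snoc w₀' b, ?_⟩
    conv_lhs => rw [← Fin.snoc_init_self w]
    rw [Fin.append_snoc, Fin.append_snoc]
    exact hb

/-- A tuple is EP-maximal. -/
def MaxEP (L : Language) {M : Type u} [L.Structure M] {n : ℕ} (x : Fin n → M) : Prop :=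
  ∀ z : Fin n → M, SubEP L x z → SubEP L z x

theorem MaxEP.mono {n : ℕ} {x y : Fin n → M} (h : MaxEP L x) (hxy : SubEP L x y) :
    MaxEP L y := fun z hz => (h z (hxy.trans hz)).trans hxy

theorem MaxEP.eqEP {n : ℕ} {x y : Fin n → M} (h : MaxEP L x) (hxy : SubEP L x y) :
    EqEP L x y := ⟨hxy, h y hxy⟩

theorem exists_maxEP [Nonempty M] (hM : Oligomorphic L M) {n : ℕ} (x : Fin n → M) :
    ∃ y, SubEP L x y ∧ MaxEP L y := by
  classical
  obtain ⟨T, hT⟩ := exists_reps hM n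
  suffices h : ∀ (c : ℕ) (x : Fin n → M),
      (T.toFinset.filter (fun s => SubEP L x s ∧ ¬ SubEP L s x)).card ≤ c →
      ∃ y, SubEP L x y ∧ MaxEP L y from h _ x le_rfl
  intro c
  induction c with
  | zero =>
    intro x hx
    refine ⟨x, SubEP.refl x, ?_⟩
    intro z hz
    obtain ⟨s, hsT, hsz⟩ := hT z
    have hxs : SubEP L x s := hz.trans hsz.2
    have hsx : SubEP L s x := by
      by_contra hn
      have : s ∈ T.toFinset.filter (fun s => SubEP L x s ∧ ¬ SubEP L s x) :=
        Finset.mem_filter.2 ⟨List.mem_toFinset.2 hsT, hxs, hn⟩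
      have := Finset.card_pos.2 ⟨s, this⟩
      omega
    exact hsz.2.trans hsx
  | succ c ih =>
    intro x hx
    by_cases hex : ∃ s ∈ T, SubEP L x s ∧ ¬ SubEP L s x
    · obtain ⟨s, hsT, hxs, hsx⟩ := hex
      have hsub : T.toFinset.filter (fun t => SubEP L s t ∧ ¬ SubEP L t s) ⊆
          T.toFinset.filter (fun t => SubEP L x t ∧ ¬ SubEP L t x) := by
        intro t ht
        rw [Finset.mem_filter] at ht ⊢
        refine ⟨ht.1, hxs.trans ht.2.1, fun htx => hsx (ht.2.1.trans htx)⟩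
      have hsmem : s ∈ T.toFinset.filter (fun t => SubEP L x t ∧ ¬ SubEP L t x) :=
        Finset.mem_filter.2 ⟨List.mem_toFinset.2 hsT, hxs, hsx⟩
      have hsnmem : s ∉ T.toFinset.filter (fun t => SubEP L s t ∧ ¬ SubEP L t s) := by
        rw [Finset.mem_filter]
        rintro ⟨-, -, hn⟩
        exact hn (SubEP.refl s)
      have hlt : (T.toFinset.filter (fun t => SubEP L s t ∧ ¬ SubEP L t s)).card <
          (T.toFinset.filter (fun t => SubEP L x t ∧ ¬ SubEP L t x)).card :=
        Finset.card_lt_card ⟨hsub, fun hh => hsnmem (hh hsmem)⟩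
      obtain ⟨y, hy1, hy2⟩ := ih s (by omega)
      exact ⟨y, hxs.trans hy1, hy2⟩
    · push_neg at hex
      refine ⟨x, SubEP.refl x, ?_⟩
      intro z hz
      obtain ⟨s, hsT, hsz⟩ := hT z
      have hxs : SubEP L x s := hz.trans hsz.2
      have hsx : SubEP L s x := by
        by_contra hn
        exact hn (hex s hsT hxs)
      exact hsz.2.trans hsx

theorem snoc_comp_sigma {α : Type*} {q l : ℕ} (C : Fin q → α) (v : α) (σ : Fin l → Fin q) :
    (Fin.snoc C v) ∘ (Fin.snoc (fun i => Fin.castSucc (σ i)) (Fin.last q) :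
      Fin (l+1) → Fin (q+1)) = Fin.snoc (C ∘ σ) v := by
  funext i
  refine Fin.lastCases ?_ (fun j => ?_) i
  · rw [Function.comp_apply, Fin.snoc_last, Fin.snoc_last, Fin.snoc_last]
  · rw [Function.comp_apply, Fin.snoc_castSucc, Fin.snoc_castSucc, Fin.snoc_castSucc]
    rfl

theorem MaxEP.comp [Nonempty M] (hM : Oligomorphic L M) {n m : ℕ} {c : Fin n → M}
    (hc : MaxEP L c) (σ : Fin m → Fin n) : MaxEP L (c ∘ σ) := by
  intro d hd
  obtain ⟨d', hbig⟩ := subEP_append_extend hM c hd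
  have h1 : SubEP L c d' := by
    have h := hbig.reindex (Fin.natAdd m)
    have e1 : (Fin.append (c ∘ σ) c) ∘ (Fin.natAdd m) = c := by
      funext i; exact Fin.append_right _ _ i
    have e2 : (Fin.append d d') ∘ (Fin.natAdd m) = d' := by
      funext i; exact Fin.append_right _ _ i
    rwa [e1, e2] at h
  have h2 : SubEP L d' c := hc d' h1
  have h3 : d = d' ∘ σ := by
    funext i
    have hx : Fin.append (c ∘ σ) c (Fin.castAdd n i) = Fin.append (c ∘ σ) c (Fin.natAdd m (σ i)) := by
      rw [Fin.append_left, Fin.append_right]; rfl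
    have := hbig.eq_of_eq hx
    rwa [Fin.append_left, Fin.append_right] at this
  rw [h3]
  exact h2.reindex σ

theorem step_lemma [Nonempty M] (hM : Oligomorphic L M) {q l : ℕ} {C : Fin q → M}
    (hC : MaxEP L C) (σ : Fin l → Fin q) {w : Fin (l+1) → M} (hw : MaxEP L w)
    (he : EqEP L (w ∘ Fin.castSucc) (C ∘ σ)) :
    ∃ v, MaxEP L (Fin.snoc C v) ∧ EqEP L w (Fin.snoc (C ∘ σ) v) := by
  obtain ⟨v₀, hv₀⟩ := subEP_snoc_extend hM he.1 (w (Fin.last l))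
  have ew : Fin.snoc (w ∘ Fin.castSucc) (w (Fin.last l)) = w := Fin.snoc_init_self w
  rw [ew] at hv₀
  obtain ⟨z, hz1, hz2⟩ := exists_maxEP hM (Fin.snoc C v₀)
  have hcs : SubEP L C (z ∘ Fin.castSucc) := by
    have h := hz1.reindex Fin.castSucc
    rwa [Fin.snoc_comp_castSucc] at h
  have hzc : SubEP L (z ∘ Fin.castSucc) C := hC _ hcs
  obtain ⟨v, hv⟩ := subEP_snoc_extend hM hzc (z (Fin.last q))
  have ez : Fin.snoc (z ∘ Fin.castSucc) (z (Fin.last q)) = z := Fin.snoc_init_self z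
  rw [ez] at hv
  have hws : SubEP L w (Fin.snoc (C ∘ σ) v) := by
    have h5 := hz1.reindex (Fin.snoc (fun i => Fin.castSucc (σ i)) (Fin.last q))
    rw [snoc_comp_sigma] at h5
    have h6 := hv.reindex (Fin.snoc (fun i => Fin.castSucc (σ i)) (Fin.last q))
    rw [snoc_comp_sigma] at h6
    exact hv₀.trans (h5.trans h6)
  exact ⟨v, hz2.mono hv, hws, hw _ hws⟩

end Bod

namespace Bod
open Fin FirstOrder.Language FirstOrder.Language.BoundedFormula FirstOrder Language

/-- Raw tasks for the construction schedule. -/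
abbrev RawTask : Type := Σ l : ℕ, (Fin l → ℕ) × ℕ

instance : Nonempty RawTask := ⟨⟨0, Fin.elim0, 0⟩⟩

noncomputable def sched : ℕ → RawTask × ℕ :=
  (exists_surjective_nat (RawTask × ℕ)).choose

theorem sched_surj : Function.Surjective sched :=
  (exists_surjective_nat (RawTask × ℕ)).choose_spec

theorem sched_unbounded (r : RawTask) (K : ℕ) : ∃ k, K ≤ k ∧ (sched k).1 = r := by
  by_contra hc
  push_neg at hc
  have hf : ∀ j : ℕ, ∃ k, sched k = (r, j) := fun j => sched_surj (r, j)
  choose f hfs using hf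
  have hfK : ∀ j, f j < K := by
    intro j
    by_contra hK
    push_neg at hK
    exact hc (f j) hK (by rw [hfs j])
  have hinj : Function.Injective f := by
    intro j j' he
    have : ((r, j) : RawTask × ℕ) = (r, j') := by rw [← hfs j, ← hfs j', he]
    exact (Prod.ext_iff.1 this).2
  exact (Set.finite_Iio K).not_infinite
    (Set.infinite_of_injective_forall_mem hinj fun j => hfK j)

variable {L : Language} {M : Type u} [L.Structure M]

noncomputable def reps (hM : Oligomorphic L M) (n : ℕ) : List (Fin n → M) :=
  (exists_reps hM n).choose

theorem reps_spec (hM : Oligomorphic L M) (n : ℕ) :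
    ∀ t : Fin n → M, ∃ s ∈ reps hM n, EqEP L s t :=
  (exists_reps hM n).choose_spec

theorem maxEP_empty : MaxEP L (Fin.elim0 : Fin 0 → M) := by
  intro z hz
  rw [Subsingleton.elim z (Fin.elim0 : Fin 0 → M)]
  exact SubEP.refl _

variable [Nonempty M]

noncomputable def wOf (hM : Oligomorphic L M) (r : RawTask) : Fin (r.1 + 1) → M :=
  (reps hM (r.1 + 1)).getD r.2.2 (fun _ => Classical.arbitrary M)

/-- The executability condition for a raw task. -/
def Cond (hM : Oligomorphic L M) (r : RawTask) (s : {p : Σ q : ℕ, (Fin q → M) // MaxEP L p.2}) :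
    Prop :=
  MaxEP L (wOf hM r) ∧ ∃ σ : Fin r.1 → Fin s.1.1,
    (∀ t, (σ t : ℕ) = r.2.1 t) ∧ EqEP L ((wOf hM r) ∘ Fin.castSucc) (s.1.2 ∘ σ)

theorem step_ex (hM : Oligomorphic L M) (r : RawTask)
    (s : {p : Σ q : ℕ, (Fin q → M) // MaxEP L p.2}) :
    ∃ s' : {p : Σ q : ℕ, (Fin q → M) // MaxEP L p.2},
      (s.1.1 ≤ s'.1.1 ∧ ∀ (j : ℕ) (hj : j < s.1.1) (hj' : j < s'.1.1),
        s'.1.2 ⟨j, hj'⟩ = s.1.2 ⟨j, hj⟩) ∧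
      (Cond hM r s → ∃ (v : M) (σ : Fin r.1 → Fin s.1.1),
        (∀ t, (σ t : ℕ) = r.2.1 t) ∧ (∃ i : Fin s'.1.1, s'.1.2 i = v) ∧
        EqEP L (wOf hM r) (Fin.snoc (s.1.2 ∘ σ) v)) := by
  by_cases hc : Cond hM r s
  · obtain ⟨hw, σ, hσ, he⟩ := hc
    obtain ⟨v, hv1, hv2⟩ := step_lemma hM s.2 σ hw he
    refine ⟨⟨⟨s.1.1 + 1, Fin.snoc s.1.2 v⟩, hv1⟩, ⟨Nat.le_succ _, ?_⟩, ?_⟩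
    · intro j hj hj'
      have e : (⟨j, hj'⟩ : Fin (s.1.1 + 1)) = Fin.castSucc ⟨j, hj⟩ := rfl
      show @Fin.snoc _ (fun _ => M) s.1.2 v ⟨j, hj'⟩ = s.1.2 ⟨j, hj⟩
      rw [e, Fin.snoc_castSucc]
    · intro _
      refine ⟨v, σ, hσ, ⟨Fin.last _, ?_⟩, hv2⟩
      show @Fin.snoc _ (fun _ => M) s.1.2 v (Fin.last s.1.1) = v
      rw [Fin.snoc_last]
  · exact ⟨s, ⟨le_rfl, fun j hj hj' => rfl⟩, fun h => absurd h hc⟩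

noncomputable def stepFn (hM : Oligomorphic L M) (r : RawTask)
    (s : {p : Σ q : ℕ, (Fin q → M) // MaxEP L p.2}) :
    {p : Σ q : ℕ, (Fin q → M) // MaxEP L p.2} :=
  (step_ex hM r s).choose

theorem stepFn_widen (hM : Oligomorphic L M) (r : RawTask)
    (s : {p : Σ q : ℕ, (Fin q → M) // MaxEP L p.2}) :
    s.1.1 ≤ (stepFn hM r s).1.1 ∧
      ∀ (j : ℕ) (hj : j < s.1.1) (hj' : j < (stepFn hM r s).1.1),
        (stepFn hM r s).1.2 ⟨j, hj'⟩ = s.1.2 ⟨j, hj⟩ :=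
  (step_ex hM r s).choose_spec.1

theorem stepFn_exec (hM : Oligomorphic L M) (r : RawTask)
    (s : {p : Σ q : ℕ, (Fin q → M) // MaxEP L p.2}) (hc : Cond hM r s) :
    ∃ (v : M) (σ : Fin r.1 → Fin s.1.1),
      (∀ t, (σ t : ℕ) = r.2.1 t) ∧ (∃ i : Fin (stepFn hM r s).1.1, (stepFn hM r s).1.2 i = v) ∧
      EqEP L (wOf hM r) (Fin.snoc (s.1.2 ∘ σ) v) :=
  (step_ex hM r s).choose_spec.2 hc

/-- The construction chain. -/
noncomputable def stage (hM : Oligomorphic L M) : ℕ → {p : Σ q : ℕ, (Fin q → M) // MaxEP L p.2}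
  | 0 => ⟨⟨0, Fin.elim0⟩, maxEP_empty⟩
  | (k+1) => stepFn hM (sched k).1 (stage hM k)

noncomputable def qq (hM : Oligomorphic L M) (k : ℕ) : ℕ := (stage hM k).1.1

noncomputable def CC (hM : Oligomorphic L M) (k : ℕ) : Fin (qq hM k) → M := (stage hM k).1.2

theorem qq_mono (hM : Oligomorphic L M) : Monotone (qq hM) := by
  apply monotone_nat_of_le_succ
  intro k
  exact (stepFn_widen hM (sched k).1 (stage hM k)).1

theorem CC_coh (hM : Oligomorphic L M) {k k' : ℕ} (hk : k ≤ k') :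
    ∀ (j : ℕ) (hj : j < qq hM k) (hj' : j < qq hM k'), CC hM k' ⟨j, hj'⟩ = CC hM k ⟨j, hj⟩ := by
  induction k', hk using Nat.le_induction with
  | base => intro j hj hj'; rfl
  | succ k' hkk ih =>
    intro j hj hj'
    have hjk' : j < qq hM k' := lt_of_lt_of_le hj (qq_mono hM hkk)
    exact ((stepFn_widen hM (sched k').1 (stage hM k')).2 j hjk' hj').trans (ih j hj hjk')

/-- The underlying set of the core. -/
def setN (hM : Oligomorphic L M) : Set M := {a : M | ∃ (k : ℕ) (i : Fin (qq hM k)), CC hM k i = a}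

theorem tupleN_exists (hM : Oligomorphic L M) {l : ℕ} (y : Fin l → M)
    (hy : ∀ i, y i ∈ setN hM) : ∃ (K : ℕ) (σ : Fin l → Fin (qq hM K)), CC hM K ∘ σ = y := by
  choose ks is his using hy
  classical
  set K := Finset.univ.sup ks with hK
  have hle : ∀ i, ks i ≤ K := fun i => Finset.le_sup (Finset.mem_univ i)
  refine ⟨K, fun i => ⟨(is i).val, lt_of_lt_of_le (is i).isLt (qq_mono hM (hle i))⟩, ?_⟩
  funext i
  show CC hM K ⟨(is i).val, _⟩ = y i
  rw [CC_coh hM (hle i) (is i).val (is i).isLt]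
  rw [← his i]

theorem maxEP_of_memN (hM : Oligomorphic L M) {l : ℕ} (y : Fin l → M)
    (hy : ∀ i, y i ∈ setN hM) : MaxEP L y := by
  obtain ⟨K, σ, hK⟩ := tupleN_exists hM y hy
  rw [← hK]
  exact MaxEP.comp hM (stage hM K).2 σ

/-- Richness of the core set: every maximal one-point EP-extension of a tuple of `setN`
is realized in `setN`. -/
theorem richness (hM : Oligomorphic L M) {l : ℕ} (y : Fin l → M)
    (hy : ∀ i, y i ∈ setN hM) (w : Fin (l+1) → M) (hw : MaxEP L w)
    (he : EqEP L (w ∘ Fin.castSucc) y) :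
    ∃ v, v ∈ setN hM ∧ EqEP L w (Fin.snoc y v) := by
  obtain ⟨K, σ, hK⟩ := tupleN_exists hM y hy
  obtain ⟨s, hsmem, hsw⟩ := reps_spec hM (l+1) w
  obtain ⟨i₀, hi₀⟩ := List.mem_iff_get.1 hsmem
  set r : RawTask := ⟨l, ((fun t => (σ t : ℕ)), i₀.val)⟩ with hr
  obtain ⟨k, hkK, hk⟩ := sched_unbounded r K
  have hgetD : wOf hM r = s := by
    show (reps hM (l+1)).getD i₀.val _ = s
    rw [List.getD_eq_getElem _ _ i₀.isLt, ← hi₀]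
    simp [List.get_eq_getElem]
  have hcond : Cond hM r (stage hM k) := by
    rw [Cond, hgetD]
    refine ⟨hw.mono hsw.2, fun t => ⟨(σ t : ℕ), lt_of_lt_of_le (σ t).isLt (qq_mono hM hkK)⟩,
      fun t => rfl, ?_⟩
    have h1 : EqEP L (s ∘ Fin.castSucc) y := (hsw.reindex Fin.castSucc).trans he
    have e : ((stage hM k).1.2 ∘ fun t =>
        (⟨(σ t : ℕ), lt_of_lt_of_le (σ t).isLt (qq_mono hM hkK)⟩ : Fin (qq hM k))) = y := by
      funext t
      show CC hM k ⟨(σ t : ℕ), _⟩ = y t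
      rw [CC_coh hM hkK (σ t : ℕ) (σ t).isLt, ← hK]
      rfl
    exact (congrArg (EqEP L (s ∘ Fin.castSucc)) e).mpr h1
  obtain ⟨v, σ', hσ', hvmem, hveq⟩ := stepFn_exec hM r (stage hM k) hcond
  rw [hgetD] at hveq
  have e' : ((stage hM k).1.2 ∘ σ') = y := by
    funext t
    have hval : (σ' t : ℕ) = (σ t : ℕ) := hσ' t
    show CC hM k (σ' t) = y t
    have : σ' t = ⟨(σ t : ℕ), lt_of_lt_of_le (σ t).isLt (qq_mono hM hkK)⟩ := Fin.ext hval
    rw [this]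
    exact (CC_coh hM hkK (σ t : ℕ) (σ t).isLt _).trans (congrFun hK t)
  rw [e'] at hveq
  have hstage : stepFn hM r (stage hM k) = stage hM (k + 1) := by
    have e : stage hM (k + 1) = stepFn hM (sched k).1 (stage hM k) := rfl
    rw [e, hk]
  rw [hstage] at hvmem
  obtain ⟨i, hi⟩ := hvmem
  exact ⟨v, ⟨k + 1, i, hi⟩, hsw.symm.trans hveq⟩

end Bod

namespace Bod
open Fin FirstOrder.Language FirstOrder.Language.BoundedFormula FirstOrder Language

variable {L : Language} [L.IsRelational] {M : Type u} [L.Structure M] [Nonempty M] [Countable M]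

noncomputable def em (M : Type u) [Nonempty M] [Countable M] : ℕ → M :=
  (exists_surjective_nat M).choose

theorem em_surj (M : Type u) [Nonempty M] [Countable M] : Function.Surjective (em M) :=
  (exists_surjective_nat M).choose_spec

theorem hom_step (hM : Oligomorphic L M) {t : ℕ} {y : Fin t → M}
    (h1 : SubEP L (fun i : Fin t => em M (i : ℕ)) y) (h2 : ∀ i, y i ∈ setN hM) :
    ∃ v, SubEP L (fun i : Fin (t+1) => em M (i : ℕ)) (Fin.snoc y v) ∧ v ∈ setN hM := by
  obtain ⟨b, hb⟩ := subEP_snoc_extend hM h1 (em M t)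
  obtain ⟨w, hw1, hw2⟩ := exists_maxEP hM (Fin.snoc y b)
  have hymax : MaxEP L y := maxEP_of_memN hM y h2
  have hcs : SubEP L y (w ∘ Fin.castSucc) := by
    have h := hw1.reindex Fin.castSucc
    rwa [Fin.snoc_comp_castSucc] at h
  have he : EqEP L (w ∘ Fin.castSucc) y := ⟨hymax _ hcs, hcs⟩
  obtain ⟨v, hv1, hv2⟩ := richness hM y h2 w hw2 he
  refine ⟨v, ?_, hv1⟩
  have e : (fun i : Fin (t+1) => em M (i : ℕ)) =
      Fin.snoc (fun i : Fin t => em M (i : ℕ)) (em M t) := by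
    funext i
    refine Fin.lastCases ?_ (fun j => ?_) i
    · rw [Fin.snoc_last]
      rfl
    · rw [Fin.snoc_castSucc]
      rfl
  rw [e]
  exact hb.trans (hw1.trans hv2.1)

noncomputable def hchain (hM : Oligomorphic L M) :
    (t : ℕ) → {y : Fin t → M // SubEP L (fun i : Fin t => em M (i : ℕ)) y ∧ ∀ i, y i ∈ setN hM}
  | 0 => ⟨Fin.elim0, by
      constructor
      · have e : (fun i : Fin 0 => em M (i : ℕ)) = Fin.elim0 := Subsingleton.elim _ _
        rw [e]
        exact SubEP.refl _
      · exact fun i => i.elim0⟩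
  | (t+1) =>
      ⟨Fin.snoc (hchain hM t).1 (hom_step hM (hchain hM t).2.1 (hchain hM t).2.2).choose, by
        constructor
        · exact (hom_step hM (hchain hM t).2.1 (hchain hM t).2.2).choose_spec.1
        · intro i
          refine Fin.lastCases ?_ (fun j => ?_) i
          · show @Fin.snoc _ (fun _ => M) (hchain hM t).1 _ (Fin.last t) ∈ setN hM
            rw [Fin.snoc_last]
            exact (hom_step hM (hchain hM t).2.1 (hchain hM t).2.2).choose_spec.2
          · show @Fin.snoc _ (fun _ => M) (hchain hM t).1 _ (Fin.castSucc j) ∈ setN hM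
            rw [Fin.snoc_castSucc]
            exact (hchain hM t).2.2 j⟩

theorem hchain_succ_val (hM : Oligomorphic L M) (t j : ℕ) (hj : j < t) (hj' : j < t + 1) :
    (hchain hM (t+1)).1 ⟨j, hj'⟩ = (hchain hM t).1 ⟨j, hj⟩ := by
  show @Fin.snoc _ (fun _ => M) (hchain hM t).1
    ((hom_step hM (hchain hM t).2.1 (hchain hM t).2.2).choose) ⟨j, hj'⟩ = _
  have e : (⟨j, hj'⟩ : Fin (t + 1)) = Fin.castSucc ⟨j, hj⟩ := rfl
  rw [e, Fin.snoc_castSucc]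

theorem hchain_coh (hM : Oligomorphic L M) {t t' : ℕ} (h : t ≤ t') :
    ∀ (j : ℕ) (hj : j < t) (hj' : j < t'), (hchain hM t').1 ⟨j, hj'⟩ = (hchain hM t).1 ⟨j, hj⟩ := by
  induction t', h using Nat.le_induction with
  | base => intro j hj hj'; rfl
  | succ t' htt ih =>
    intro j hj hj'
    have hjt' : j < t' := lt_of_lt_of_le hj htt
    exact (hchain_succ_val hM t' j hjt' hj').trans (ih j hj hjt')

noncomputable def emIdx (a : M) : ℕ := (em_surj M a).choose

theorem emIdx_spec (a : M) : em M (emIdx a) = a := (em_surj M a).choose_spec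

noncomputable def hfun (hM : Oligomorphic L M) : M → M :=
  fun a => (hchain hM (emIdx a + 1)).1 (Fin.last _)

theorem hfun_mem (hM : Oligomorphic L M) (a : M) : hfun hM a ∈ setN hM :=
  (hchain hM (emIdx a + 1)).2.2 (Fin.last _)

theorem hfun_rel (hM : Oligomorphic L M) {n : ℕ} (r : L.Relations n) (x : Fin n → M)
    (h : RelMap r x) : RelMap r (hfun hM ∘ x) := by
  classical
  set d : Fin n → ℕ := fun i => emIdx (x i) with hd
  set T : ℕ := (Finset.univ.sup d) + 1 with hT
  have hlt : ∀ i, d i < T := fun i =>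
    Nat.lt_succ_of_le (Finset.le_sup (Finset.mem_univ i))
  set σ : Fin n → Fin T := fun i => ⟨d i, hlt i⟩ with hσ
  have hsub := (hchain hM T).2.1
  have e1 : ((fun i : Fin T => em M (i : ℕ)) ∘ σ) = x := by
    funext i
    show em M (d i) = x i
    exact emIdx_spec (x i)
  have e2 : ((hchain hM T).1 ∘ σ) = hfun hM ∘ x := by
    funext i
    show (hchain hM T).1 ⟨d i, hlt i⟩ = (hchain hM (d i + 1)).1 (Fin.last _)
    have hle : d i + 1 ≤ T := hlt i
    have := hchain_coh hM hle (d i) (Nat.lt_succ_self _) (hlt i)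
    rw [this]
    congr 1
  have h' : RelMap r ((fun i : Fin T => em M (i : ℕ)) ∘ σ) := by rw [e1]; exact h
  have h'' := hsub.relMap h'
  rwa [e2] at h''

noncomputable def homToN (hM : Oligomorphic L M) : M →[L] ↥(setN hM) where
  toFun := fun a => ⟨hfun hM a, hfun_mem hM a⟩
  map_fun' := fun {n} f => isEmptyElim f
  map_rel' := fun {n} r x h => hfun_rel hM r x h

noncomputable def incN (hM : Oligomorphic L M) : ↥(setN hM) →[L] M where
  toFun := fun a => (a : M)
  map_fun' := fun {n} f => isEmptyElim f
  map_rel' := fun {n} r x h => h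

theorem subEP_endo (hM : Oligomorphic L M) (hEP : ContainsEP L M)
    (e : ↥(setN hM) →[L] ↥(setN hM)) {n : ℕ} (x : Fin n → ↥(setN hM)) :
    SubEP L (fun i => (x i : M)) (fun i => ((e (x i)) : M)) := by
  intro φ hφ hr
  obtain ⟨r, hrel⟩ := hEP n φ hφ
  have h1 : RelMap r (fun i => (x i : M)) := (hrel _).2 hr
  have h2 : RelMap (M := ↥(setN hM)) r x := h1
  have h3 := e.map_rel' r x h2
  have h4 : RelMap r (fun i => ((e (x i)) : M)) := h3
  exact (hrel _).1 h4

theorem maxN (hM : Oligomorphic L M) {n : ℕ} (x : Fin n → ↥(setN hM)) :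
    MaxEP L (fun i => (x i : M)) :=
  maxEP_of_memN hM _ (fun i => (x i).2)

theorem isCore_N (hM : Oligomorphic L M) (hEP : ContainsEP L M) : IsCore L ↥(setN hM) := by
  intro e
  constructor
  · intro p q hpq
    set x : Fin 2 → ↥(setN hM) := ![p, q] with hx
    have hback : SubEP L (fun i => ((e (x i)) : M)) (fun i => (x i : M)) :=
      maxN hM x _ (subEP_endo hM hEP e x)
    have heq : (fun i => ((e (x i)) : M)) 0 = (fun i => ((e (x i)) : M)) 1 := by
      simp only [hx, Matrix.cons_val_zero, Matrix.cons_val_one, Matrix.head_cons]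
      rw [hpq]
    have := hback.eq_of_eq heq
    simp only [hx, Matrix.cons_val_zero, Matrix.cons_val_one, Matrix.head_cons] at this
    exact Subtype.ext this
  · intro n r x
    constructor
    · intro h
      have hback : SubEP L (fun i => ((e (x i)) : M)) (fun i => (x i : M)) :=
        maxN hM x _ (subEP_endo hM hEP e x)
      have h' : RelMap r ((fun i => ((e (x i)) : M)) ∘ id) := h
      have := hback.relMap h'
      exact this
    · exact fun h => e.map_rel' r x h

end Bod

namespace Bod
open FirstOrder Language

variable {L : Language} [L.IsRelational] {A B : Type u} [L.Structure A] [L.Structure B]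

noncomputable def bfChain (P : List (A × B) → Prop)
    (hforth : ∀ p, P p → ∀ a, ∃ b, P (p ++ [(a, b)]))
    (hback : ∀ p, P p → ∀ b, ∃ a, P (p ++ [(a, b)]))
    (p₀ : List (A × B)) (hp₀ : P p₀) (eA : ℕ → A) (eB : ℕ → B) :
    ℕ → {p : List (A × B) // P p}
  | 0 => ⟨p₀, hp₀⟩
  | (k+1) =>
    let p := bfChain P hforth hback p₀ hp₀ eA eB k
    if k % 2 = 0 then
      ⟨p.1 ++ [(eA (k/2), (hforth p.1 p.2 (eA (k/2))).choose)],
        (hforth p.1 p.2 _).choose_spec⟩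
    else
      ⟨p.1 ++ [((hback p.1 p.2 (eB (k/2))).choose, eB (k/2))],
        (hback p.1 p.2 _).choose_spec⟩

theorem bfChain_succ_mem (P : List (A × B) → Prop)
    (hforth : ∀ p, P p → ∀ a, ∃ b, P (p ++ [(a, b)]))
    (hback : ∀ p, P p → ∀ b, ∃ a, P (p ++ [(a, b)]))
    (p₀ : List (A × B)) (hp₀ : P p₀) (eA : ℕ → A) (eB : ℕ → B) (k : ℕ) {x : A × B}
    (hx : x ∈ (bfChain P hforth hback p₀ hp₀ eA eB k).1) :
    x ∈ (bfChain P hforth hback p₀ hp₀ eA eB (k+1)).1 := by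
  by_cases h : k % 2 = 0 <;>
    simp only [bfChain, h, if_true, if_false, List.mem_append] <;>
    exact Or.inl hx

theorem bfChain_mem_mono (P : List (A × B) → Prop)
    (hforth : ∀ p, P p → ∀ a, ∃ b, P (p ++ [(a, b)]))
    (hback : ∀ p, P p → ∀ b, ∃ a, P (p ++ [(a, b)]))
    (p₀ : List (A × B)) (hp₀ : P p₀) (eA : ℕ → A) (eB : ℕ → B) {k k' : ℕ} (h : k ≤ k')
    {x : A × B} (hx : x ∈ (bfChain P hforth hback p₀ hp₀ eA eB k).1) :
    x ∈ (bfChain P hforth hback p₀ hp₀ eA eB k').1 := by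
  induction k', h using Nat.le_induction with
  | base => exact hx
  | succ k' hkk ih => exact bfChain_succ_mem P hforth hback p₀ hp₀ eA eB k' ih

theorem bfChain_coverA (P : List (A × B) → Prop)
    (hforth : ∀ p, P p → ∀ a, ∃ b, P (p ++ [(a, b)]))
    (hback : ∀ p, P p → ∀ b, ∃ a, P (p ++ [(a, b)]))
    (p₀ : List (A × B)) (hp₀ : P p₀) (eA : ℕ → A) (eB : ℕ → B) (k : ℕ) (h0 : k % 2 = 0) :
    ∃ b, (eA (k/2), b) ∈ (bfChain P hforth hback p₀ hp₀ eA eB (k+1)).1 := by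
  refine ⟨(hforth _ (bfChain P hforth hback p₀ hp₀ eA eB k).2 (eA (k/2))).choose, ?_⟩
  simp only [bfChain, h0, if_true, List.mem_append, List.mem_singleton]
  exact Or.inr trivial

theorem bfChain_coverB (P : List (A × B) → Prop)
    (hforth : ∀ p, P p → ∀ a, ∃ b, P (p ++ [(a, b)]))
    (hback : ∀ p, P p → ∀ b, ∃ a, P (p ++ [(a, b)]))
    (p₀ : List (A × B)) (hp₀ : P p₀) (eA : ℕ → A) (eB : ℕ → B) (k : ℕ) (h0 : ¬ (k % 2 = 0)) :
    ∃ a, (a, eB (k/2)) ∈ (bfChain P hforth hback p₀ hp₀ eA eB (k+1)).1 := by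
  refine ⟨(hback _ (bfChain P hforth hback p₀ hp₀ eA eB k).2 (eB (k/2))).choose, ?_⟩
  simp only [bfChain, h0, if_false, List.mem_append, List.mem_singleton]
  exact Or.inr trivial

/-- Generic back-and-forth lemma. -/
theorem back_and_forth [Countable A] [Countable B] (P : List (A × B) → Prop)
    (hinj : ∀ p, P p → ∀ ab ∈ p, ∀ cd ∈ p, ((ab.1 : A) = cd.1 ↔ ab.2 = cd.2))
    (hrel : ∀ p, P p → ∀ (n : ℕ) (r : L.Relations n) (xs : Fin n → A × B),
      (∀ i, xs i ∈ p) → (RelMap r (fun i => (xs i).1) ↔ RelMap r (fun i => (xs i).2)))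
    (hforth : ∀ p, P p → ∀ a, ∃ b, P (p ++ [(a, b)]))
    (hback : ∀ p, P p → ∀ b, ∃ a, P (p ++ [(a, b)]))
    {p₀ : List (A × B)} (hp₀ : P p₀) :
    ∃ α : A ≃[L] B, ∀ ab ∈ p₀, α ab.1 = ab.2 := by
  classical
  rcases isEmpty_or_nonempty A with hA | hA
  · have hB : IsEmpty B := ⟨fun b => (hback p₀ hp₀ b).elim (fun a _ => isEmptyElim a)⟩
    refine ⟨⟨⟨fun a => isEmptyElim a, fun b => (hB.false b).elim,
      fun a => isEmptyElim a, fun b => (hB.false b).elim⟩,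
      fun {n} f => isEmptyElim f, ?_⟩, fun ab _ => isEmptyElim ab.1⟩
    intro n r x
    match n with
    | 0 =>
      have h := hrel p₀ hp₀ 0 r (fun i => Fin.elim0 i) (fun i => Fin.elim0 i)
      convert h.symm using 2 <;> exact Subsingleton.elim _ _
    | (n+1) => exact isEmptyElim (x 0)
  · have hBne : Nonempty B := (hforth p₀ hp₀ (Classical.arbitrary A)).elim (fun b _ => ⟨b⟩)
    set eA : ℕ → A := em A with heA
    set eB : ℕ → B := em B with heB
    set chain : ℕ → {p : List (A × B) // P p} := bfChain P hforth hback p₀ hp₀ eA eB with hchain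
    have hmono : ∀ {k k'}, k ≤ k' → ∀ {x : A × B}, x ∈ (chain k).1 → x ∈ (chain k').1 :=
      fun {k k'} hkk {x} hx => bfChain_mem_mono P hforth hback p₀ hp₀ eA eB hkk hx
    have hFex : ∀ a : A, ∃ (b : B) (k : ℕ), (a, b) ∈ (chain k).1 := by
      intro a
      obtain ⟨t, ht⟩ := em_surj A a
      obtain ⟨b, hb⟩ := bfChain_coverA P hforth hback p₀ hp₀ eA eB (2*t) (by omega)
      rw [show (2*t)/2 = t by omega] at hb
      exact ⟨b, 2*t+1, by rw [← ht]; exact hb⟩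
    have hGex : ∀ b : B, ∃ (a : A) (k : ℕ), (a, b) ∈ (chain k).1 := by
      intro b
      obtain ⟨t, ht⟩ := em_surj B b
      obtain ⟨a, ha⟩ := bfChain_coverB P hforth hback p₀ hp₀ eA eB (2*t+1) (by omega)
      rw [show (2*t+1)/2 = t by omega] at ha
      exact ⟨a, 2*t+1+1, by rw [← ht]; exact ha⟩
    choose F kF hF using hFex
    choose G kG hG using hGex
    have hconsR : ∀ {a b b' k k'}, (a, b) ∈ (chain k).1 → (a, b') ∈ (chain k').1 → b = b' := by
      intro a b b' k k' h1 h2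
      have h1' := hmono (le_max_left k k') h1
      have h2' := hmono (le_max_right k k') h2
      exact (hinj _ (chain (max k k')).2 _ h1' _ h2').1 rfl
    have hconsL : ∀ {a a' b k k'}, (a, b) ∈ (chain k).1 → (a', b) ∈ (chain k').1 → a = a' := by
      intro a a' b k k' h1 h2
      have h1' := hmono (le_max_left k k') h1
      have h2' := hmono (le_max_right k k') h2
      exact (hinj _ (chain (max k k')).2 _ h1' _ h2').2 rfl
    have hGF : ∀ a, G (F a) = a := fun a => hconsL (hG (F a)) (hF a)
    have hFG : ∀ b, F (G b) = b := fun b => hconsR (hF (G b)) (hG b)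
    refine ⟨⟨⟨F, G, hGF, hFG⟩, fun {n} f => isEmptyElim f, ?_⟩, ?_⟩
    · intro n r x
      set K : ℕ := Finset.univ.sup (fun i => kF (x i)) with hK
      have hmem : ∀ i, (x i, F (x i)) ∈ (chain K).1 :=
        fun i => hmono (Finset.le_sup (Finset.mem_univ i)) (hF (x i))
      have h := hrel _ (chain K).2 n r (fun i => (x i, F (x i))) hmem
      exact h.symm
    · intro ab hab
      have h0 : (ab.1, ab.2) ∈ (chain 0).1 := by
        show (ab.1, ab.2) ∈ p₀
        rw [Prod.mk.eta]
        exact hab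
      exact hconsR (hF ab.1) h0

end Bod

namespace Bod
open Fin FirstOrder.Language FirstOrder Language

theorem exists_index_fun {γ : Type v} (l : List γ) {n : ℕ} (xs : Fin n → γ)
    (h : ∀ i, xs i ∈ l) : ∃ σ : Fin n → Fin l.length, ∀ i, l.get (σ i) = xs i := by
  choose σ hσ using fun i => List.mem_iff_get.1 (h i)
  exact ⟨σ, hσ⟩

theorem list_get_append_singleton {γ : Type v} (l : List γ) (z : γ)
    (j : Fin (l ++ [z]).length) :
    (l ++ [z]).get j = @Fin.snoc _ (fun _ => γ) l.get z
      (Fin.cast (show (l ++ [z]).length = l.length + 1 by simp) j) := by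
  rcases lt_or_ge (j : ℕ) l.length with h | h
  · have e : (Fin.cast (show (l ++ [z]).length = l.length + 1 by simp) j : Fin (l.length + 1)) =
        Fin.castSucc ⟨(j : ℕ), h⟩ := rfl
    rw [e, Fin.snoc_castSucc]
    simp only [List.get_eq_getElem]
    exact List.getElem_append_left h
  · have hj : (j : ℕ) = l.length := by
      have := j.isLt
      simp only [List.length_append, List.length_singleton] at this
      omega
    have e : (Fin.cast (show (l ++ [z]).length = l.length + 1 by simp) j : Fin (l.length + 1)) =
        Fin.last l.length := Fin.ext (by simp [hj])
    rw [e, Fin.snoc_last]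
    simp only [List.get_eq_getElem]
    have : (l ++ [z])[(j : ℕ)] = (l ++ [z])[l.length]'(by simp) := by
      congr 1
    rw [this]
    exact List.getElem_concat_length (l := l) (a := z) (i := l.length) rfl (by simp)

variable {L : Language} [L.IsRelational] {M : Type u} [L.Structure M] [Nonempty M] [Countable M]

/-- The back-and-forth invariant for automorphism construction in `setN`. -/
def PN (hM : Oligomorphic L M) : List (↥(setN hM) × ↥(setN hM)) → Prop := fun p =>
  ∀ (n : ℕ) (xs : Fin n → (↥(setN hM) × ↥(setN hM))), (∀ i, xs i ∈ p) →
    EqEP L (fun i => ((xs i).1 : M)) (fun i => ((xs i).2 : M))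

theorem PN_inj (hM : Oligomorphic L M) (p : List (↥(setN hM) × ↥(setN hM))) (hp : PN hM p) :
    ∀ ab ∈ p, ∀ cd ∈ p, (ab.1 = cd.1 ↔ ab.2 = cd.2) := by
  intro ab hab cd hcd
  have h := hp 2 ![ab, cd] (by
    intro i
    fin_cases i <;> simpa)
  have h0 : (![ab, cd] 0) = ab := rfl
  have h1 : (![ab, cd] 1) = cd := rfl
  constructor
  · intro he
    have : ((![ab, cd] 0).1 : M) = ((![ab, cd] 1).1 : M) := by rw [h0, h1, he]
    have := h.1.eq_of_eq this
    rw [h0, h1] at this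
    exact Subtype.ext this
  · intro he
    have : ((![ab, cd] 0).2 : M) = ((![ab, cd] 1).2 : M) := by rw [h0, h1, he]
    have := h.2.eq_of_eq this
    rw [h0, h1] at this
    exact Subtype.ext this

theorem PN_rel (hM : Oligomorphic L M) (p : List (↥(setN hM) × ↥(setN hM))) (hp : PN hM p) :
    ∀ (n : ℕ) (r : L.Relations n) (xs : Fin n → (↥(setN hM) × ↥(setN hM))),
      (∀ i, xs i ∈ p) →
      (RelMap r (fun i => (xs i).1) ↔ RelMap r (fun i => (xs i).2)) := by
  intro n r xs hxs
  have h := hp n xs hxs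
  constructor
  · intro hr
    have h1 : RelMap r ((fun i => ((xs i).1 : M)) ∘ id) := hr
    exact h.1.relMap h1
  · intro hr
    have h1 : RelMap r ((fun i => ((xs i).2 : M)) ∘ id) := hr
    exact h.2.relMap h1

theorem PN_ext (hM : Oligomorphic L M) (p : List (↥(setN hM) × ↥(setN hM))) (hp : PN hM p)
    (a b : ↥(setN hM))
    (hab : EqEP L (Fin.snoc (fun i => ((p.get i).1 : M)) (a : M))
      (Fin.snoc (fun i => ((p.get i).2 : M)) (b : M))) : PN hM (p ++ [(a, b)]) := by
  intro n xs hxs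
  obtain ⟨σ, hσ⟩ := exists_index_fun (p ++ [(a, b)]) xs hxs
  set τ : Fin n → Fin (p.length + 1) := fun i =>
    Fin.cast (show (p ++ [(a, b)]).length = p.length + 1 by simp) (σ i) with hτ
  have hσ' : ∀ i, (Fin.snoc p.get (a, b) :
      Fin (p.length + 1) → ↥(setN hM) × ↥(setN hM)) (τ i) = xs i := by
    intro i
    rw [← list_get_append_singleton p (a, b) (σ i)]
    exact hσ i
  have hfst : (fun j => (((Fin.snoc p.get (a, b) : Fin (p.length + 1) → ↥(setN hM) × ↥(setN hM)) j).1 : M)) =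
      Fin.snoc (fun i => ((p.get i).1 : M)) (a : M) := by
    funext j
    refine Fin.lastCases ?_ (fun i => ?_) j
    · rw [Fin.snoc_last, Fin.snoc_last]
    · rw [Fin.snoc_castSucc, Fin.snoc_castSucc]
  have hsnd : (fun j => (((Fin.snoc p.get (a, b) : Fin (p.length + 1) → ↥(setN hM) × ↥(setN hM)) j).2 : M)) =
      Fin.snoc (fun i => ((p.get i).2 : M)) (b : M) := by
    funext j
    refine Fin.lastCases ?_ (fun i => ?_) j
    · rw [Fin.snoc_last, Fin.snoc_last]
    · rw [Fin.snoc_castSucc, Fin.snoc_castSucc]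
  have hbig : EqEP L (fun j => (((Fin.snoc p.get (a, b) : Fin (p.length + 1) → ↥(setN hM) × ↥(setN hM)) j).1 : M))
      (fun j => (((Fin.snoc p.get (a, b) : Fin (p.length + 1) → ↥(setN hM) × ↥(setN hM)) j).2 : M)) := by
    rw [hfst, hsnd]
    exact hab
  have h := hbig.reindex τ
  have e1 : ((fun j => (((Fin.snoc p.get (a, b) : Fin (p.length + 1) → ↥(setN hM) × ↥(setN hM)) j).1 : M)) ∘ τ) =
      (fun i => ((xs i).1 : M)) := by
    funext i
    show (((Fin.snoc p.get (a, b) : Fin (p.length + 1) → ↥(setN hM) × ↥(setN hM)) (τ i)).1 : M) = _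
    rw [hσ' i]
  have e2 : ((fun j => (((Fin.snoc p.get (a, b) : Fin (p.length + 1) → ↥(setN hM) × ↥(setN hM)) j).2 : M)) ∘ τ) =
      (fun i => ((xs i).2 : M)) := by
    funext i
    show (((Fin.snoc p.get (a, b) : Fin (p.length + 1) → ↥(setN hM) × ↥(setN hM)) (τ i)).2 : M) = _
    rw [hσ' i]
  rwa [e1, e2] at h

theorem PN_forth (hM : Oligomorphic L M) (p : List (↥(setN hM) × ↥(setN hM))) (hp : PN hM p) :
    ∀ a, ∃ b, PN hM (p ++ [(a, b)]) := by
  intro a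
  have hfull : EqEP L (fun i => ((p.get i).1 : M)) (fun i => ((p.get i).2 : M)) :=
    hp p.length p.get (fun i => List.get_mem p i)
  set xM : Fin p.length → M := fun i => ((p.get i).1 : M) with hxM
  set yM : Fin p.length → M := fun i => ((p.get i).2 : M) with hyM
  set w : Fin (p.length + 1) → M := Fin.snoc xM (a : M) with hw
  have hwmem : ∀ i, w i ∈ setN hM := by
    intro i
    refine Fin.lastCases ?_ (fun j => ?_) i
    · show @Fin.snoc _ (fun _ => M) xM (a : M) (Fin.last p.length) ∈ setN hM
      rw [Fin.snoc_last]
      exact a.2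
    · show @Fin.snoc _ (fun _ => M) xM (a : M) (Fin.castSucc j) ∈ setN hM
      rw [Fin.snoc_castSucc]
      exact ((p.get j).1).2
  have hwmax : MaxEP L w := maxEP_of_memN hM w hwmem
  have hymem : ∀ i, yM i ∈ setN hM := fun i => ((p.get i).2).2
  have hcs : EqEP L (w ∘ Fin.castSucc) yM := by
    have e : w ∘ Fin.castSucc = xM := Fin.snoc_comp_castSucc
    rw [e]
    exact hfull
  obtain ⟨v, hvmem, hveq⟩ := richness hM yM hymem w hwmax hcs
  exact ⟨⟨v, hvmem⟩, PN_ext hM p hp a ⟨v, hvmem⟩ hveq⟩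

theorem PN_back (hM : Oligomorphic L M) (p : List (↥(setN hM) × ↥(setN hM))) (hp : PN hM p) :
    ∀ b, ∃ a, PN hM (p ++ [(a, b)]) := by
  intro b
  have hfull : EqEP L (fun i => ((p.get i).1 : M)) (fun i => ((p.get i).2 : M)) :=
    hp p.length p.get (fun i => List.get_mem p i)
  set xM : Fin p.length → M := fun i => ((p.get i).1 : M) with hxM
  set yM : Fin p.length → M := fun i => ((p.get i).2 : M) with hyM
  set w : Fin (p.length + 1) → M := Fin.snoc yM (b : M) with hw
  have hwmem : ∀ i, w i ∈ setN hM := by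
    intro i
    refine Fin.lastCases ?_ (fun j => ?_) i
    · show @Fin.snoc _ (fun _ => M) yM (b : M) (Fin.last p.length) ∈ setN hM
      rw [Fin.snoc_last]
      exact b.2
    · show @Fin.snoc _ (fun _ => M) yM (b : M) (Fin.castSucc j) ∈ setN hM
      rw [Fin.snoc_castSucc]
      exact ((p.get j).2).2
  have hwmax : MaxEP L w := maxEP_of_memN hM w hwmem
  have hxmem : ∀ i, xM i ∈ setN hM := fun i => ((p.get i).1).2
  have hcs : EqEP L (w ∘ Fin.castSucc) xM := by
    have e : w ∘ Fin.castSucc = yM := Fin.snoc_comp_castSucc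
    rw [e]
    exact hfull.symm
  obtain ⟨v, hvmem, hveq⟩ := richness hM xM hxmem w hwmax hcs
  exact ⟨⟨v, hvmem⟩, PN_ext hM p hp ⟨v, hvmem⟩ b hveq.symm⟩

theorem PN_ofFn (hM : Oligomorphic L M) {n : ℕ} (x y : Fin n → ↥(setN hM))
    (h : EqEP L (fun i => (x i : M)) (fun i => (y i : M))) :
    PN hM (List.ofFn (fun i => (x i, y i))) := by
  intro m xs hxs
  obtain ⟨σ, hσ⟩ := exists_index_fun _ xs hxs
  set τ : Fin m → Fin n := fun i =>
    Fin.cast (show (List.ofFn (fun i => (x i, y i))).length = n by simp) (σ i) with hτ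
  have hσ' : ∀ i, (x (τ i), y (τ i)) = xs i := by
    intro i
    rw [← hσ i, List.get_ofFn]
  have e1 : ((fun i => (x i : M)) ∘ τ) = fun i => ((xs i).1 : M) := by
    funext i
    show ((x (τ i) : M)) = _
    rw [← hσ' i]
  have e2 : ((fun i => (y i : M)) ∘ τ) = fun i => ((xs i).2 : M) := by
    funext i
    show ((y (τ i) : M)) = _
    rw [← hσ' i]
  have h' := h.reindex τ
  rwa [e1, e2] at h'

/-- Any two EP-equivalent tuples of the core are automorphic. -/
theorem equiv_of_eqEP (hM : Oligomorphic L M) {n : ℕ} (x y : Fin n → ↥(setN hM))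
    (h : EqEP L (fun i => (x i : M)) (fun i => (y i : M))) :
    ∃ α : ↥(setN hM) ≃[L] ↥(setN hM), ∀ i, α (x i) = y i := by
  obtain ⟨α, hα⟩ := back_and_forth (PN hM) (PN_inj hM) (PN_rel hM) (PN_forth hM) (PN_back hM)
    (PN_ofFn hM x y h)
  exact ⟨α, fun i => hα (x i, y i) (by rw [List.mem_ofFn]; exact ⟨i, rfl⟩)⟩

theorem isHomog_N (hM : Oligomorphic L M) (hEP : ContainsEP L M) :
    IsHomogeneous L ↥(setN hM) := by
  intro s hs f hinjf hpres
  obtain ⟨n, x, hxinj, hxrange⟩ := hs.fin_param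
  have hmem : ∀ i, x i ∈ s := by
    intro i
    rw [← hxrange]
    exact Set.mem_range_self i
  have hEq : EqEP L (fun i => (x i : M)) (fun i => ((f (x i)) : M)) := by
    constructor <;> intro φ hφ hr
    · obtain ⟨r, hrel⟩ := hEP _ φ hφ
      have h1 : RelMap r (fun i => (x i : M)) := (hrel _).2 hr
      have h2 : RelMap (M := ↥(setN hM)) r x := h1
      have h3 := (hpres _ r x hmem).1 h2
      exact (hrel _).1 h3
    · obtain ⟨r, hrel⟩ := hEP _ φ hφ
      have h1 : RelMap r (fun i => ((f (x i)) : M)) := (hrel _).2 hr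
      have h2 : RelMap (M := ↥(setN hM)) r (f ∘ x) := h1
      have h3 := (hpres _ r x hmem).2 h2
      exact (hrel _).1 h3
  obtain ⟨α, hα⟩ := equiv_of_eqEP hM x (f ∘ x) hEq
  refine ⟨α, fun a ha => ?_⟩
  rw [← hxrange] at ha
  obtain ⟨i, rfl⟩ := ha
  exact hα i

theorem oligo_N (hM : Oligomorphic L M) : Oligomorphic L ↥(setN hM) := by
  intro n
  classical
  rcases isEmpty_or_nonempty (Fin n → ↥(setN hM)) with hE | hNe
  · exact ⟨∅, Set.finite_empty, fun t => isEmptyElim t⟩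
  · set pick : (Fin n → M) → (Fin n → ↥(setN hM)) := fun s =>
      if h : ∃ t : Fin n → ↥(setN hM), EqEP L s (fun i => (t i : M)) then h.choose
      else Classical.arbitrary _ with hpick
    refine ⟨pick '' {s | s ∈ reps hM n}, Set.Finite.image _ (List.finite_toSet _), ?_⟩
    intro t
    obtain ⟨s, hsmem, hseq⟩ := reps_spec hM n (fun i => (t i : M))
    have hex : ∃ t' : Fin n → ↥(setN hM), EqEP L s (fun i => (t' i : M)) := ⟨t, hseq⟩
    have hpicks : EqEP L s (fun i => ((pick s i) : M)) := by
      rw [hpick]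
      simp only [dif_pos hex]
      exact hex.choose_spec
    have hEq : EqEP L (fun i => ((pick s i) : M)) (fun i => (t i : M)) :=
      hpicks.symm.trans hseq
    obtain ⟨α, hα⟩ := equiv_of_eqEP hM (pick s) t hEq
    exact ⟨pick s, Set.mem_image_of_mem _ hsmem, α, hα⟩

end Bod

namespace Bod
open Fin FirstOrder.Language FirstOrder Language

variable {L : Language} [L.IsRelational] {M : Type u} [L.Structure M] [Nonempty M] [Countable M]

/-- The invariant for the uniqueness back-and-forth. -/
def PU (hM : Oligomorphic L M) {N' : Type u} [L.Structure N'] :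
    List (↥(setN hM) × N') → Prop := fun p =>
  ∃ (H : ↥(setN hM) →[L] N') (K : N' →[L] ↥(setN hM)),
    ∀ ab ∈ p, H ab.1 = ab.2 ∧ K ab.2 = ab.1

theorem unique_N (hM : Oligomorphic L M) (hEP : ContainsEP L M) {N' : Type u}
    [iN' : L.Structure N'] (hHom' : IsHomogeneous L N') (hCore' : IsCore L N')
    (hHE' : HomEquiv L M N') : Nonempty (↥(setN hM) ≃[L] N') := by
  classical
  obtain ⟨⟨f'⟩, ⟨g'⟩⟩ := hHE'
  have hg'inj : Function.Injective ⇑g' := by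
    have h := (hCore' (f'.comp g')).1
    intro a b hab
    apply h
    show (f'.comp g') a = (f'.comp g') b
    simp only [Hom.comp_apply, hab]
  haveI : Countable N' := hg'inj.countable
  have hCoreN := isCore_N hM hEP
  have hHomN := isHomog_N hM hEP
  have hinj : ∀ p : List (↥(setN hM) × N'), PU hM p → ∀ ab ∈ p, ∀ cd ∈ p, ((ab.1 : ↥(setN hM)) = cd.1 ↔ ab.2 = cd.2) := by
    rintro p ⟨H, K, hp⟩ ab hab cd hcd
    constructor
    · intro h
      rw [← (hp ab hab).1, ← (hp cd hcd).1, h]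
    · intro h
      rw [← (hp ab hab).2, ← (hp cd hcd).2, h]
  have hrel : ∀ p : List (↥(setN hM) × N'), PU hM p → ∀ (n : ℕ) (r : L.Relations n) (xs : Fin n → ↥(setN hM) × N'),
      (∀ i, xs i ∈ p) → (RelMap r (fun i => (xs i).1) ↔ RelMap r (fun i => (xs i).2)) := by
    rintro p ⟨H, K, hp⟩ n r xs hxs
    constructor
    · intro h
      have h1 := H.map_rel' r (fun i => (xs i).1) h
      have e : (H.toFun ∘ fun i => (xs i).1) = fun i => (xs i).2 := by
        funext i
        exact (hp (xs i) (hxs i)).1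
      rwa [e] at h1
    · intro h
      have h1 := K.map_rel' r (fun i => (xs i).2) h
      have e : (K.toFun ∘ fun i => (xs i).2) = fun i => (xs i).1 := by
        funext i
        exact (hp (xs i) (hxs i)).2
      rwa [e] at h1
  have hforth : ∀ p : List (↥(setN hM) × N'), PU hM p → ∀ a, ∃ b, PU hM (p ++ [(a, b)]) := by
    rintro p ⟨H, K, hp⟩ a
    set e : ↥(setN hM) →[L] ↥(setN hM) := K.comp H with he
    set s : Set ↥(setN hM) := insert a {c | ∃ ab ∈ p, (ab : ↥(setN hM) × N').1 = c} with hs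
    have hsfin : s.Finite := by
      apply Set.Finite.insert
      have : {c | ∃ ab ∈ p, (ab : ↥(setN hM) × N').1 = c} = Prod.fst '' {x | x ∈ p} := by
        ext c
        simp [Set.mem_image]
      rw [this]
      exact (p.finite_toSet).image _
    obtain ⟨β, hβ⟩ := hHomN s hsfin ⇑e ((hCoreN e).1.injOn)
      (fun n r x _ => ((hCoreN e).2 n r x).symm)
    refine ⟨H a, H, (β.symm.toHom).comp K, ?_⟩
    intro ab hab
    rcases List.mem_append.1 hab with hab' | hab'
    · refine ⟨(hp ab hab').1, ?_⟩
      show β.symm (K ab.2) = ab.1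
      rw [(hp ab hab').2]
      have hfix : β ab.1 = ab.1 := by
        have h1 : β ab.1 = e ab.1 := hβ ab.1 (Set.mem_insert_of_mem _ ⟨ab, hab', rfl⟩)
        rw [h1, he]
        show K (H ab.1) = ab.1
        rw [(hp ab hab').1, (hp ab hab').2]
      calc β.symm ab.1 = β.symm (β ab.1) := by rw [hfix]
        _ = ab.1 := β.left_inv ab.1
    · have hab2 : ab = (a, H a) := by simpa using hab'
      subst hab2
      refine ⟨rfl, ?_⟩
      show β.symm (K (H a)) = a
      have h1 : β a = e a := hβ a (Set.mem_insert _ _)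
      have h2 : K (H a) = β a := by rw [h1]; rfl
      rw [h2]
      exact β.left_inv a
  have hback : ∀ p : List (↥(setN hM) × N'), PU hM p → ∀ b, ∃ a, PU hM (p ++ [(a, b)]) := by
    rintro p ⟨H, K, hp⟩ b
    set e : N' →[L] N' := H.comp K with he
    set s : Set N' := insert b {c | ∃ ab ∈ p, (ab : ↥(setN hM) × N').2 = c} with hs
    have hsfin : s.Finite := by
      apply Set.Finite.insert
      have : {c | ∃ ab ∈ p, (ab : ↥(setN hM) × N').2 = c} = Prod.snd '' {x | x ∈ p} := by
        ext c
        simp [Set.mem_image]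
      rw [this]
      exact (p.finite_toSet).image _
    obtain ⟨γ, hγ⟩ := hHom' s hsfin ⇑e ((hCore' e).1.injOn)
      (fun n r x _ => ((hCore' e).2 n r x).symm)
    refine ⟨K b, (γ.symm.toHom).comp H, K, ?_⟩
    intro ab hab
    rcases List.mem_append.1 hab with hab' | hab'
    · refine ⟨?_, (hp ab hab').2⟩
      show γ.symm (H ab.1) = ab.2
      rw [(hp ab hab').1]
      have hfix : γ ab.2 = ab.2 := by
        have h1 : γ ab.2 = e ab.2 := hγ ab.2 (Set.mem_insert_of_mem _ ⟨ab, hab', rfl⟩)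
        rw [h1, he]
        show H (K ab.2) = ab.2
        rw [(hp ab hab').2, (hp ab hab').1]
      calc γ.symm ab.2 = γ.symm (γ ab.2) := by rw [hfix]
        _ = ab.2 := γ.left_inv ab.2
    · have hab2 : ab = (K b, b) := by simpa using hab'
      subst hab2
      refine ⟨?_, rfl⟩
      show γ.symm (H (K b)) = b
      have h1 : γ b = e b := hγ b (Set.mem_insert _ _)
      have h2 : H (K b) = γ b := by rw [h1]; rfl
      rw [h2]
      exact γ.left_inv b
  have hp₀ : PU hM ([] : List (↥(setN hM) × N')) :=
    ⟨f'.comp (incN hM), (homToN hM).comp g', fun ab hab => absurd hab List.not_mem_nil⟩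
  obtain ⟨α, -⟩ := back_and_forth (PU hM) hinj hrel hforth hback hp₀
  exact ⟨α⟩

end Bod


theorem stmt_6 {L : Language} [L.IsRelational] {M : Type u} [L.Structure M] [Countable M]
    (hM : Oligomorphic L M) (hEP : ContainsEP L M) :
    ∃ (N : Type u) (iN : L.Structure N),
      @IsHomogeneous L N iN ∧ @IsCore L N iN ∧ @HomEquiv L M N _ iN ∧
        (Finite N ∨ @Oligomorphic L N iN) ∧
        ∀ (N' : Type u) (iN' : L.Structure N'),
          @IsHomogeneous L N' iN' → @IsCore L N' iN' → @HomEquiv L M N' _ iN' →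
            Nonempty (@Language.Equiv L N N' iN iN') := by
  classical
  rcases isEmpty_or_nonempty M with hE | hNe
  · refine ⟨M, ‹_›, ?_, ?_, ⟨⟨Hom.id L M⟩, ⟨Hom.id L M⟩⟩,
      Or.inl (@Finite.of_fintype M (@Fintype.ofIsEmpty M hE)), ?_⟩
    · intro s hs f hinjf hpres
      exact ⟨FirstOrder.Language.Equiv.refl L M, fun a _ => isEmptyElim a⟩
    · intro e
      refine ⟨fun a => isEmptyElim a, ?_⟩
      intro n r x
      match n with
      | 0 => rw [Subsingleton.elim (⇑e ∘ x) x]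
      | n+1 => exact isEmptyElim (x 0)
    · intro N' iN' h1 h2 hhe
      obtain ⟨⟨f⟩, ⟨g⟩⟩ := hhe
      haveI : IsEmpty N' := ⟨fun b => isEmptyElim (g b)⟩
      refine ⟨⟨⟨fun a => isEmptyElim a, fun b => isEmptyElim b,
        fun a => isEmptyElim a, fun b => isEmptyElim b⟩,
        fun {n} fn => isEmptyElim fn, ?_⟩⟩
      intro n r x
      match n with
      | 0 =>
        have keyM : ∀ (u w : Fin 0 → M), RelMap r u → RelMap r w := by
          intro u w h'
          rwa [Subsingleton.elim w u]
        have keyN : ∀ (u w : Fin 0 → N'), RelMap r u → RelMap r w := by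
          intro u w h'
          rwa [Subsingleton.elim w u]
        constructor
        · intro h
          exact keyM _ x (g.map_rel' r _ h)
        · intro h
          exact keyN _ _ (f.map_rel' r x h)
      | n+1 => exact isEmptyElim (x 0)
  · refine ⟨↥(Bod.setN hM), Set.inducedStructure L (Bod.setN hM),
      Bod.isHomog_N hM hEP, Bod.isCore_N hM hEP,
      ⟨⟨Bod.homToN hM⟩, ⟨Bod.incN hM⟩⟩, Or.inr (Bod.oligo_N hM), ?_⟩
    intro N' iN' h1 h2 h3
    exact Bod.unique_N hM hEP h1 h2 h3
end
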